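/- arXiv:2301.07620 — 7 statements merged into one kernel-verified Lean document; each statement's English description precedes it below -/
import Mathlib

section
/- Let ω = e^{2πi/3}, let 𝒩 ⊆ ℝ² be open, and let q : ℝ² → ℂ be smooth on 𝒩 and satisfy i q_t − (1/√3) q_xx + 2√3 \overline{q} \overline{q}_x = 0 on 𝒩. Then the function u(x,t) = −(9/2)|q(x,t)|² − 3 Re( ω q_x(x,t) ) is smooth and real-valued on 𝒩 and satisfies the rescaled Boussinesq equation u_tt + (1/3) u_xxxx + (4/3)(u²)_xx = 0 on 𝒩. -/
/-- Partial derivative in the first (spatial) variable. -/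
noncomputable def pdx {E : Type*} [NormedAddCommGroup E] [NormedSpace ℝ E]
    (f : ℝ × ℝ → E) : ℝ × ℝ → E := fun p => fderiv ℝ f p (1, 0)

/-- Partial derivative in the second (time) variable. -/
noncomputable def pdt {E : Type*} [NormedAddCommGroup E] [NormedSpace ℝ E]
    (f : ℝ × ℝ → E) : ℝ × ℝ → E := fun p => fderiv ℝ f p (0, 1)

/-- ω = e^{2πi/3} -/
noncomputable def ω : ℂ := Complex.exp (2 * Real.pi * Complex.I / 3)

namespace MiuraAux

open Complex

open Complex

lemma pdv_add {f g : ℝ × ℝ → ℂ} {p v : ℝ × ℝ} (hf : DifferentiableAt ℝ f p)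
    (hg : DifferentiableAt ℝ g p) :
    fderiv ℝ (fun x => f x + g x) p v = fderiv ℝ f p v + fderiv ℝ g p v := by
  rw [fderiv_fun_add hf hg]; rfl

lemma pdv_mul {f g : ℝ × ℝ → ℂ} {p v : ℝ × ℝ} (hf : DifferentiableAt ℝ f p)
    (hg : DifferentiableAt ℝ g p) :
    fderiv ℝ (fun x => f x * g x) p v = f p * fderiv ℝ g p v + g p * fderiv ℝ f p v := by
  rw [fderiv_fun_mul hf hg]; rfl

lemma pdv_const {a : ℂ} {p v : ℝ × ℝ} :
    fderiv ℝ (fun _ : ℝ × ℝ => a) p v = 0 := by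
  rw [fderiv_fun_const]; rfl

lemma conj_comp (f : ℝ × ℝ → ℂ) :
    (fun x => (starRingEnd ℂ) (f x)) = (RCLike.conjCLE : ℂ ≃L[ℝ] ℂ) ∘ f := by
  funext x; simp [RCLike.conjCLE_apply]

lemma pdv_conj (f : ℝ × ℝ → ℂ) (p v : ℝ × ℝ) :
    fderiv ℝ (fun x => (starRingEnd ℂ) (f x)) p v
      = (starRingEnd ℂ) (fderiv ℝ f p v) := by
  rw [conj_comp f, ContinuousLinearEquiv.comp_fderiv]
  simp [RCLike.conjCLE_apply]

lemma pdv_re {v : ℝ × ℝ → ℝ} {V : ℝ × ℝ → ℂ} {p w : ℝ × ℝ}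
    (hV : DifferentiableAt ℝ V p) (h : v =ᶠ[nhds p] fun x => (V x).re) :
    fderiv ℝ v p w = (fderiv ℝ V p w).re := by
  rw [h.fderiv_eq]
  have : (fun x => (V x).re) = (Complex.reCLM : ℂ →L[ℝ] ℝ) ∘ V := rfl
  rw [this, (Complex.reCLM.hasFDerivAt.comp p hV.hasFDerivAt).fderiv]
  rfl

lemma contDiffOn_pdx {f : ℝ × ℝ → ℂ} {N : Set (ℝ × ℝ)} (hN : IsOpen N)
    (hf : ContDiffOn ℝ (⊤ : ℕ∞) f N) : ContDiffOn ℝ (⊤ : ℕ∞) (pdx f) N :=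
  (hf.fderiv_of_isOpen hN (by simp)).clm_apply contDiffOn_const

lemma pd_comm {N : Set (ℝ × ℝ)} (hN : IsOpen N) {f : ℝ × ℝ → ℂ}
    (hf : ContDiffOn ℝ (⊤ : ℕ∞) f N) {p : ℝ × ℝ} (hp : p ∈ N) :
    pdt (pdx f) p = pdx (pdt f) p := by
  have hc : DifferentiableAt ℝ (fderiv ℝ f) p :=
    ((hf.fderiv_of_isOpen hN (m := (⊤ : ℕ∞)) (by simp)).differentiableOn (by simp)).differentiableAt
      (hN.mem_nhds hp)
  have key : ∀ v w : ℝ × ℝ, fderiv ℝ (fun y => fderiv ℝ f y v) p w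
      = fderiv ℝ (fderiv ℝ f) p w v := by
    intro v w
    rw [fderiv_clm_apply hc (differentiableAt_const v)]
    simp
  have hsym : IsSymmSndFDerivAt ℝ f p :=
    (hf.contDiffAt (hN.mem_nhds hp)).isSymmSndFDerivAt (by rw [minSmoothness_of_isRCLikeNormedField]; exact WithTop.coe_le_coe.mpr le_top)
  show fderiv ℝ (fun y => fderiv ℝ f y (1,0)) p (0,1)
      = fderiv ℝ (fun y => fderiv ℝ f y (0,1)) p (1,0)
  rw [key, key]
  exact hsym (0,1) (1,0)



inductive MExpr where
  | jet : ℕ → MExpr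
  | cjet : ℕ → MExpr
  | cst : ℂ → MExpr
  | add : MExpr → MExpr → MExpr
  | mul : MExpr → MExpr → MExpr

namespace MExpr

noncomputable def eval (J : ℕ → ℝ × ℝ → ℂ) : MExpr → ℝ × ℝ → ℂ
  | jet k => J k
  | cjet k => fun p => (starRingEnd ℂ) (J k p)
  | cst a => fun _ => a
  | add e₁ e₂ => fun p => e₁.eval J p + e₂.eval J p
  | mul e₁ e₂ => fun p => e₁.eval J p * e₂.eval J p

def dx : MExpr → MExpr
  | jet k => jet (k + 1)
  | cjet k => cjet (k + 1)
  | cst _ => cst 0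
  | add e₁ e₂ => add e₁.dx e₂.dx
  | mul e₁ e₂ => add (mul e₁.dx e₂) (mul e₁ e₂.dx)

def conj : MExpr → MExpr
  | jet k => cjet k
  | cjet k => jet k
  | cst a => cst ((starRingEnd ℂ) a)
  | add e₁ e₂ => add e₁.conj e₂.conj
  | mul e₁ e₂ => mul e₁.conj e₂.conj

/-- expression for `∂ₜ q` given by the PDE, with `s = √3`. -/
noncomputable def T0 : MExpr :=
  add (mul (cst (-(Complex.I * (Real.sqrt 3 : ℂ) / 3))) (jet 2))
    (mul (cst (2 * (Real.sqrt 3 : ℂ) * Complex.I)) (mul (cjet 0) (cjet 1)))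

noncomputable def Tn : ℕ → MExpr
  | 0 => T0
  | k + 1 => (Tn k).dx

noncomputable def dt : MExpr → MExpr
  | jet k => Tn k
  | cjet k => (Tn k).conj
  | cst _ => cst 0
  | add e₁ e₂ => add e₁.dt e₂.dt
  | mul e₁ e₂ => add (mul e₁.dt e₂) (mul e₁ e₂.dt)

lemma eval_conj (J : ℕ → ℝ × ℝ → ℂ) (e : MExpr) (p : ℝ × ℝ) :
    e.conj.eval J p = (starRingEnd ℂ) (e.eval J p) := by
  induction e with
  | jet k => rfl
  | cjet k => simp [conj, eval]
  | cst a => rfl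
  | add e₁ e₂ h₁ h₂ => simp [conj, eval, h₁, h₂]
  | mul e₁ e₂ h₁ h₂ => simp [conj, eval, h₁, h₂]

section

variable {N : Set (ℝ × ℝ)} (hN : IsOpen N) {J : ℕ → ℝ × ℝ → ℂ}
  (hJs : ∀ k, ContDiffOn ℝ (⊤ : ℕ∞) (J k) N)

include hN hJs

omit hN in
lemma eval_contDiffOn (e : MExpr) : ContDiffOn ℝ (⊤ : ℕ∞) (e.eval J) N := by
  induction e with
  | jet k => exact hJs k
  | cjet k =>
      have : eval J (cjet k) = fun p => (RCLike.conjCLE : ℂ ≃L[ℝ] ℂ) (J k p) := by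
        funext x; simp [eval, RCLike.conjCLE_apply]
      rw [this]
      exact (RCLike.conjCLE : ℂ ≃L[ℝ] ℂ).toContinuousLinearMap.contDiff.comp_contDiffOn (hJs k)
  | cst a => exact contDiffOn_const
  | add e₁ e₂ h₁ h₂ => exact h₁.add h₂
  | mul e₁ e₂ h₁ h₂ => exact h₁.mul h₂

lemma eval_diffAt (e : MExpr) {p : ℝ × ℝ} (hp : p ∈ N) :
    DifferentiableAt ℝ (e.eval J) p :=
  ((eval_contDiffOn hJs e).differentiableOn (by simp)).differentiableAt (hN.mem_nhds hp)

variable (hJ : ∀ k, J (k + 1) = pdx (J k))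

include hJ

lemma eval_dx (e : MExpr) {p : ℝ × ℝ} (hp : p ∈ N) :
    pdx (e.eval J) p = e.dx.eval J p := by
  induction e with
  | jet k => show pdx (J k) p = J (k+1) p; rw [hJ]
  | cjet k =>
      show fderiv ℝ (fun x => (starRingEnd ℂ) (J k x)) p (1,0)
        = (starRingEnd ℂ) (J (k+1) p)
      rw [pdv_conj, hJ]; rfl
  | cst a => exact pdv_const
  | add e₁ e₂ h₁ h₂ =>
      show fderiv ℝ (fun x => e₁.eval J x + e₂.eval J x) p (1,0) = _
      rw [pdv_add (eval_diffAt hN hJs e₁ hp) (eval_diffAt hN hJs e₂ hp)]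
      exact congrArg₂ (· + ·) h₁ h₂
  | mul e₁ e₂ h₁ h₂ =>
      show fderiv ℝ (fun x => e₁.eval J x * e₂.eval J x) p (1,0) = _
      rw [pdv_mul (eval_diffAt hN hJs e₁ hp) (eval_diffAt hN hJs e₂ hp)]
      show eval J e₁ p * pdx (eval J e₂) p + eval J e₂ p * pdx (eval J e₁) p = _
      rw [h₁, h₂]
      show _ = e₁.dx.eval J p * e₂.eval J p + e₁.eval J p * e₂.dx.eval J p
      ring

variable (hT : ∀ k, ∀ p ∈ N, pdt (J k) p = (Tn k).eval J p)

include hT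

omit hJ in
lemma eval_dt (e : MExpr) {p : ℝ × ℝ} (hp : p ∈ N) :
    pdt (e.eval J) p = e.dt.eval J p := by
  induction e with
  | jet k => exact hT k p hp
  | cjet k =>
      show fderiv ℝ (fun x => (starRingEnd ℂ) (J k x)) p (0,1) = _
      rw [pdv_conj]
      show _ = ((Tn k).conj).eval J p
      rw [eval_conj]
      exact congrArg _ (hT k p hp)
  | cst a => exact pdv_const
  | add e₁ e₂ h₁ h₂ =>
      show fderiv ℝ (fun x => e₁.eval J x + e₂.eval J x) p (0,1) = _
      rw [pdv_add (eval_diffAt hN hJs e₁ hp) (eval_diffAt hN hJs e₂ hp)]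
      exact congrArg₂ (· + ·) h₁ h₂
  | mul e₁ e₂ h₁ h₂ =>
      show fderiv ℝ (fun x => e₁.eval J x * e₂.eval J x) p (0,1) = _
      rw [pdv_mul (eval_diffAt hN hJs e₁ hp) (eval_diffAt hN hJs e₂ hp)]
      show eval J e₁ p * pdt (eval J e₂) p + eval J e₂ p * pdt (eval J e₁) p = _
      rw [h₁, h₂]
      show _ = e₁.dt.eval J p * e₂.eval J p + e₁.eval J p * e₂.dt.eval J p
      ring

end
end MExpr
end MiuraAux


open MiuraAux.MExpr in

noncomputable def UE : MiuraAux.MExpr :=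
  .add (.mul (.cst ((-(9:ℝ)/2 : ℝ) : ℂ)) (.mul (.jet 0) (.cjet 0)))
    (.mul (.cst ((-(3:ℝ)/2 : ℝ) : ℂ))
      (.add (.mul (.cst ω) (.jet 1)) (.mul (.cst ((starRingEnd ℂ) ω)) (.cjet 1))))

/-- Miura transformation: if `q` is smooth on an open set `𝒩` and satisfies
`i q_t - (1/√3) q_xx + 2√3 q̄ q̄_x = 0` there, then
`u = -(9/2)|q|² - 3 Re(ω q_x)` is smooth, real-valued, and satisfies
`u_tt + (1/3) u_xxxx + (4/3)(u²)_xx = 0` on `𝒩`. -/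
theorem miura_rescaled_boussinesq (N : Set (ℝ × ℝ)) (hN : IsOpen N)
    (q : ℝ × ℝ → ℂ) (hq : ContDiffOn ℝ (⊤ : ℕ∞) q N)
    (heq : ∀ p ∈ N,
      Complex.I * pdt q p - (1 / (Real.sqrt 3 : ℂ)) * pdx (pdx q) p
        + 2 * (Real.sqrt 3 : ℂ) * (starRingEnd ℂ) (q p) * (starRingEnd ℂ) (pdx q p) = 0)
    (u : ℝ × ℝ → ℝ)
    (hu : u = fun p => -(9 / 2) * ‖q p‖ ^ 2 - 3 * (ω * pdx q p).re) :
    ContDiffOn ℝ (⊤ : ℕ∞) u N ∧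
    ∀ p ∈ N,
      pdt (pdt u) p + (1 / 3) * pdx (pdx (pdx (pdx u))) p
        + (4 / 3) * pdx (pdx (fun p' => u p' ^ 2)) p = 0 := by
  classical
  open MiuraAux MiuraAux.MExpr in
  have hs : ((Real.sqrt 3 : ℝ) : ℂ) ^ 2 = 3 := by
    norm_cast
    rw [Real.sq_sqrt] <;> norm_num
  have hs0 : ((Real.sqrt 3 : ℝ) : ℂ) ≠ 0 := by
    simpa using Real.sqrt_ne_zero'.mpr (by norm_num : (0:ℝ) < 3)
  have hω : ω = (-1 + Complex.I * ((Real.sqrt 3 : ℝ) : ℂ)) / 2 := by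
    unfold ω
    have h1 : (2 * (Real.pi : ℂ) * Complex.I / 3) = ((2 * Real.pi / 3 : ℝ) : ℂ) * Complex.I := by
      push_cast; ring
    have h2 : Real.cos (2 * Real.pi / 3) = -(1/2) := by
      rw [show 2 * Real.pi / 3 = Real.pi - Real.pi / 3 by ring, Real.cos_pi_sub,
        Real.cos_pi_div_three]
    have h3 : Real.sin (2 * Real.pi / 3) = Real.sqrt 3 / 2 := by
      rw [show 2 * Real.pi / 3 = Real.pi - Real.pi / 3 by ring, Real.sin_pi_sub,
        Real.sin_pi_div_three]
    rw [h1, Complex.exp_mul_I, ← Complex.ofReal_cos, ← Complex.ofReal_sin, h2, h3]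
    push_cast; ring
  set J : ℕ → ℝ × ℝ → ℂ := fun k => pdx^[k] q with hJdef
  have hJ : ∀ k, J (k+1) = pdx (J k) := fun k => Function.iterate_succ_apply' pdx k q
  have hJ0 : J 0 = q := rfl
  have hJ1 : J 1 = pdx q := rfl
  have hJ2 : J 2 = pdx (pdx q) := rfl
  have hJs : ∀ k, ContDiffOn ℝ (⊤ : ℕ∞) (J k) N := by
    intro k; induction k with
    | zero => exact hq
    | succ k ih => rw [hJ]; exact MiuraAux.contDiffOn_pdx hN ih
  have hT : ∀ k, ∀ p ∈ N, pdt (J k) p = (Tn k).eval J p := by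
    intro k; induction k with
    | zero =>
      intro p hp
      have H := heq p hp
      have h13 : (1 : ℂ) / ((Real.sqrt 3 : ℝ) : ℂ) = ((Real.sqrt 3 : ℝ) : ℂ) / 3 := by
        rw [div_eq_div_iff hs0 (by norm_num : (3:ℂ) ≠ 0)]
        linear_combination -hs
      rw [h13] at H
      rw [hJ0]
      simp only [Tn, T0, eval, hJ0, hJ1, hJ2]
      linear_combination (-Complex.I) * H + pdt q p * Complex.I_sq
    | succ k ih =>
      intro p hp
      rw [hJ k, MiuraAux.pd_comm hN (hJs k) hp]
      have hev : pdt (J k) =ᶠ[nhds p] (Tn k).eval J :=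
        Filter.eventually_of_mem (hN.mem_nhds hp) (fun y hy => ih y hy)
      show fderiv ℝ (pdt (J k)) p (1,0) = _
      rw [hev.fderiv_eq]
      exact eval_dx hN hJs hJ (Tn k) hp
  -- link u with the evaluation of UE
  have hre : ∀ p, u p = ((UE.eval J) p).re := by
    intro p
    rw [hu]
    show -(9 / 2) * ‖q p‖ ^ 2 - 3 * (ω * pdx q p).re
      = (((-(9:ℝ)/2 : ℝ) : ℂ) * (J 0 p * (starRingEnd ℂ) (J 0 p))
        + ((-(3:ℝ)/2 : ℝ) : ℂ) * (ω * J 1 p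
          + (starRingEnd ℂ) ω * (starRingEnd ℂ) (J 1 p))).re
    rw [hJ0, hJ1, ← map_mul, Complex.add_conj, Complex.mul_conj,
      ← Complex.ofReal_mul, ← Complex.ofReal_mul, ← Complex.ofReal_add,
      Complex.ofReal_re, ← Complex.sq_norm]
    ring
  have him : ∀ p, ((UE.eval J) p).im = 0 := by
    intro p
    show (((-(9:ℝ)/2 : ℝ) : ℂ) * (J 0 p * (starRingEnd ℂ) (J 0 p))
        + ((-(3:ℝ)/2 : ℝ) : ℂ) * (ω * J 1 p
          + (starRingEnd ℂ) ω * (starRingEnd ℂ) (J 1 p))).im = 0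
    rw [← map_mul, Complex.add_conj, Complex.mul_conj,
      ← Complex.ofReal_mul, ← Complex.ofReal_mul, ← Complex.ofReal_add,
      Complex.ofReal_im]
  have hueq : u = fun x => ((UE.eval J) x).re := funext hre
  refine ⟨?_, ?_⟩
  · rw [hueq]
    exact (Complex.reCLM.contDiff (n := ((⊤ : ℕ∞) : WithTop ℕ∞))).comp_contDiffOn
      (eval_contDiffOn hJs UE)
  intro p hp
  -- x-derivative chain
  have hux1 : ∀ p ∈ N, pdx u p = ((UE.dx.eval J) p).re := by
    intro p hp
    show fderiv ℝ u p (1,0) = _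
    rw [MiuraAux.pdv_re (eval_diffAt hN hJs UE hp)
      (Filter.Eventually.of_forall hre)]
    exact congrArg Complex.re (eval_dx hN hJs hJ UE hp)
  have hux2 : ∀ p ∈ N, pdx (pdx u) p = ((UE.dx.dx.eval J) p).re := by
    intro p hp
    show fderiv ℝ (pdx u) p (1,0) = _
    rw [MiuraAux.pdv_re (eval_diffAt hN hJs UE.dx hp)
      (Filter.eventually_of_mem (hN.mem_nhds hp) (fun y hy => hux1 y hy))]
    exact congrArg Complex.re (eval_dx hN hJs hJ UE.dx hp)
  have hux3 : ∀ p ∈ N, pdx (pdx (pdx u)) p = ((UE.dx.dx.dx.eval J) p).re := by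
    intro p hp
    show fderiv ℝ (pdx (pdx u)) p (1,0) = _
    rw [MiuraAux.pdv_re (eval_diffAt hN hJs UE.dx.dx hp)
      (Filter.eventually_of_mem (hN.mem_nhds hp) (fun y hy => hux2 y hy))]
    exact congrArg Complex.re (eval_dx hN hJs hJ UE.dx.dx hp)
  have hux4 : ∀ p ∈ N, pdx (pdx (pdx (pdx u))) p = ((UE.dx.dx.dx.dx.eval J) p).re := by
    intro p hp
    show fderiv ℝ (pdx (pdx (pdx u))) p (1,0) = _
    rw [MiuraAux.pdv_re (eval_diffAt hN hJs UE.dx.dx.dx hp)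
      (Filter.eventually_of_mem (hN.mem_nhds hp) (fun y hy => hux3 y hy))]
    exact congrArg Complex.re (eval_dx hN hJs hJ UE.dx.dx.dx hp)
  -- t-derivative chain
  have hut1 : ∀ p ∈ N, pdt u p = ((UE.dt.eval J) p).re := by
    intro p hp
    show fderiv ℝ u p (0,1) = _
    rw [MiuraAux.pdv_re (eval_diffAt hN hJs UE hp)
      (Filter.Eventually.of_forall hre)]
    exact congrArg Complex.re (eval_dt hN hJs hT UE hp)
  have hutt : ∀ p ∈ N, pdt (pdt u) p = ((UE.dt.dt.eval J) p).re := by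
    intro p hp
    show fderiv ℝ (pdt u) p (0,1) = _
    rw [MiuraAux.pdv_re (eval_diffAt hN hJs UE.dt hp)
      (Filter.eventually_of_mem (hN.mem_nhds hp) (fun y hy => hut1 y hy))]
    exact congrArg Complex.re (eval_dt hN hJs hT UE.dt hp)
  -- square chain
  have hsq : ∀ x, u x ^ 2 = (((UE.mul UE).eval J) x).re := by
    intro x
    have : ((UE.mul UE).eval J) x = (UE.eval J) x * (UE.eval J) x := rfl
    rw [this, Complex.mul_re, him, hre]
    ring
  have hsqx1 : ∀ p ∈ N, pdx (fun p' => u p' ^ 2) p = (((UE.mul UE).dx.eval J) p).re := by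
    intro p hp
    show fderiv ℝ (fun p' => u p' ^ 2) p (1,0) = _
    rw [MiuraAux.pdv_re (eval_diffAt hN hJs (UE.mul UE) hp)
      (Filter.Eventually.of_forall hsq)]
    exact congrArg Complex.re (eval_dx hN hJs hJ (UE.mul UE) hp)
  have hsqx2 : ∀ p ∈ N, pdx (pdx (fun p' => u p' ^ 2)) p
      = (((UE.mul UE).dx.dx.eval J) p).re := by
    intro p hp
    show fderiv ℝ (pdx (fun p' => u p' ^ 2)) p (1,0) = _
    rw [MiuraAux.pdv_re (eval_diffAt hN hJs (UE.mul UE).dx hp)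
      (Filter.eventually_of_mem (hN.mem_nhds hp) (fun y hy => hsqx1 y hy))]
    exact congrArg Complex.re (eval_dx hN hJs hJ (UE.mul UE).dx hp)
  rw [hutt p hp, hux4 p hp, hsqx2 p hp]
  have key : (UE.dt.dt.eval J) p + ((1/3 : ℝ) : ℂ) * (UE.dx.dx.dx.dx.eval J) p
      + ((4/3 : ℝ) : ℂ) * (((UE.mul UE).dx.dx.eval J) p) = 0 := by
    simp only [UE, dt, dx, Tn, conj, T0, eval]
    rw [hω]
    push_cast
    simp only [map_div₀, map_add, map_sub, map_neg, map_mul, map_one, map_ofNat,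
      Complex.conj_I, Complex.conj_ofReal, map_zero, Complex.conj_conj]
    linear_combination (((1:ℂ)/12)*((starRingEnd ℂ) (J 5 p))*Complex.I^2 + ((1:ℂ)/12)*((starRingEnd ℂ) (J 5 p))*Complex.I^3*((Real.sqrt 3 : ℝ) : ℂ) + ((1:ℂ)/2)*((starRingEnd ℂ) (J 2 p))^2*Complex.I^2 + (1:ℂ)*((starRingEnd ℂ) (J 2 p))^2*Complex.I^3*((Real.sqrt 3 : ℝ) : ℂ) + ((1:ℂ)/2)*((starRingEnd ℂ) (J 1 p))*((starRingEnd ℂ) (J 3 p))*Complex.I^2 + (1:ℂ)*((starRingEnd ℂ) (J 1 p))*((starRingEnd ℂ) (J 3 p))*Complex.I^3*((Real.sqrt 3 : ℝ) : ℂ) + ((1:ℂ)/12)*(J 5 p)*Complex.I^2 + ((-1:ℂ)/12)*(J 5 p)*Complex.I^3*((Real.sqrt 3 : ℝ) : ℂ) + ((-1:ℂ)/2)*(J 4 p)*((starRingEnd ℂ) (J 0 p))*Complex.I^2 + ((-3:ℂ)/2)*(J 3 p)*((starRingEnd ℂ) (J 1 p))*Complex.I^2 + (-2:ℂ)*(J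 2 p)*((starRingEnd ℂ) (J 2 p))*Complex.I^2 + (-3:ℂ)*(J 2 p)*((starRingEnd ℂ) (J 0 p))*((starRingEnd ℂ) (J 1 p))*Complex.I^2 + (-3:ℂ)*(J 2 p)*((starRingEnd ℂ) (J 0 p))*((starRingEnd ℂ) (J 1 p))*Complex.I^3*((Real.sqrt 3 : ℝ) : ℂ) + ((1:ℂ)/2)*(J 2 p)^2*Complex.I^2 + (-1:ℂ)*(J 2 p)^2*Complex.I^3*((Real.sqrt 3 : ℝ) : ℂ) + ((-3:ℂ)/2)*(J 1 p)*((starRingEnd ℂ) (J 3 p))*Complex.I^2 + (-6:ℂ)*(J 1 p)*((starRingEnd ℂ) (J 1 p))^2*Complex.I^2 + (-6:ℂ)*(J 1 p)*((starRingEnd ℂ) (J 1 p))^2*Complex.I^3*((Real.sqrt 3 : ℝ) : ℂ) + (-6:ℂ)*(J 1 p)*((starRingEnd ℂ) (J 0 p))*((starRingEnd ℂ) (J 2 p))*Complex.I^2 + (-6:ℂ)*(J 1 p)*((starRingEnd ℂ) (J 0 p))*((starRingEnd ℂ) (J 2 p))*Complex.I^3*((Real.sqrt 3 : ℝ) : ℂ)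 + ((1:ℂ)/2)*(J 1 p)*(J 3 p)*Complex.I^2 + (-1:ℂ)*(J 1 p)*(J 3 p)*Complex.I^3*((Real.sqrt 3 : ℝ) : ℂ) + (-9:ℂ)*(J 1 p)*(J 2 p)*((starRingEnd ℂ) (J 0 p))*Complex.I^2 + (9:ℂ)*(J 1 p)*(J 2 p)*((starRingEnd ℂ) (J 0 p))*Complex.I^3*((Real.sqrt 3 : ℝ) : ℂ) + (-6:ℂ)*(J 1 p)^2*((starRingEnd ℂ) (J 1 p))*Complex.I^2 + (6:ℂ)*(J 1 p)^2*((starRingEnd ℂ) (J 1 p))*Complex.I^3*((Real.sqrt 3 : ℝ) : ℂ) + (18:ℂ)*(J 1 p)^2*((starRingEnd ℂ) (J 0 p))^2*Complex.I^2 + ((-1:ℂ)/2)*(J 0 p)*((starRingEnd ℂ) (J 4 p))*Complex.I^2 + (-9:ℂ)*(J 0 p)*((starRingEnd ℂ) (J 1 p))*((starRingEnd ℂ) (J 2 p))*Complex.I^2 + (-9:ℂ)*(J 0 p)*((starRingEnd ℂ) (J 1 p))*((starRingEnd ℂ) (J 2 p))*Complex.I^3*((Real.sqrt 3 : ℝ)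 : ℂ) + (-3:ℂ)*(J 0 p)*((starRingEnd ℂ) (J 0 p))*((starRingEnd ℂ) (J 3 p))*Complex.I^2 + (-3:ℂ)*(J 0 p)*((starRingEnd ℂ) (J 0 p))*((starRingEnd ℂ) (J 3 p))*Complex.I^3*((Real.sqrt 3 : ℝ) : ℂ) + (-3:ℂ)*(J 0 p)*(J 3 p)*((starRingEnd ℂ) (J 0 p))*Complex.I^2 + (3:ℂ)*(J 0 p)*(J 3 p)*((starRingEnd ℂ) (J 0 p))*Complex.I^3*((Real.sqrt 3 : ℝ) : ℂ) + (-6:ℂ)*(J 0 p)*(J 2 p)*((starRingEnd ℂ) (J 1 p))*Complex.I^2 + (6:ℂ)*(J 0 p)*(J 2 p)*((starRingEnd ℂ) (J 1 p))*Complex.I^3*((Real.sqrt 3 : ℝ) : ℂ) + (18:ℂ)*(J 0 p)*(J 2 p)*((starRingEnd ℂ) (J 0 p))^2*Complex.I^2 + (-3:ℂ)*(J 0 p)*(J 1 p)*((starRingEnd ℂ) (J 2 p))*Complex.I^2 + (3:ℂ)*(J 0 p)*(J 1 p)*((starRingEnd ℂ) (J 2 p))*Complex.I^3*((Real.sqrt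 3 : ℝ) : ℂ) + (72:ℂ)*(J 0 p)*(J 1 p)*((starRingEnd ℂ) (J 0 p))*((starRingEnd ℂ) (J 1 p))*Complex.I^2 + (18:ℂ)*(J 0 p)^2*((starRingEnd ℂ) (J 1 p))^2*Complex.I^2 + (18:ℂ)*(J 0 p)^2*((starRingEnd ℂ) (J 0 p))*((starRingEnd ℂ) (J 2 p))*Complex.I^2) * hs + (((1:ℂ)/4)*((starRingEnd ℂ) (J 5 p)) + ((1:ℂ)/4)*((starRingEnd ℂ) (J 5 p))*Complex.I*((Real.sqrt 3 : ℝ) : ℂ) + ((3:ℂ)/2)*((starRingEnd ℂ) (J 2 p))^2 + (3:ℂ)*((starRingEnd ℂ) (J 2 p))^2*Complex.I*((Real.sqrt 3 : ℝ) : ℂ) + ((3:ℂ)/2)*((starRingEnd ℂ) (J 1 p))*((starRingEnd ℂ) (J 3 p)) + (3:ℂ)*((starRingEnd ℂ) (J 1 p))*((starRingEnd ℂ) (J 3 p))*Complex.I*((Real.sqrt 3 : ℝ) : ℂ) + ((1:ℂ)/4)*(J 5 p) + ((-1:ℂ)/4)*(J 5 p)*Complex.I*((Real.sqrt 3 : ℝ)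 : ℂ) + ((-3:ℂ)/2)*(J 4 p)*((starRingEnd ℂ) (J 0 p)) + ((-9:ℂ)/2)*(J 3 p)*((starRingEnd ℂ) (J 1 p)) + (-6:ℂ)*(J 2 p)*((starRingEnd ℂ) (J 2 p)) + (-9:ℂ)*(J 2 p)*((starRingEnd ℂ) (J 0 p))*((starRingEnd ℂ) (J 1 p)) + (-9:ℂ)*(J 2 p)*((starRingEnd ℂ) (J 0 p))*((starRingEnd ℂ) (J 1 p))*Complex.I*((Real.sqrt 3 : ℝ) : ℂ) + ((3:ℂ)/2)*(J 2 p)^2 + (-3:ℂ)*(J 2 p)^2*Complex.I*((Real.sqrt 3 : ℝ) : ℂ) + ((-9:ℂ)/2)*(J 1 p)*((starRingEnd ℂ) (J 3 p)) + (-18:ℂ)*(J 1 p)*((starRingEnd ℂ) (J 1 p))^2 + (-18:ℂ)*(J 1 p)*((starRingEnd ℂ) (J 1 p))^2*Complex.I*((Real.sqrt 3 : ℝ) : ℂ) + (-18:ℂ)*(J 1 p)*((starRingEnd ℂ) (J 0 p))*((starRingEnd ℂ) (J 2 p)) + (-18:ℂ)*(J 1 p)*((starRingEnd ℂ) (J 0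 p))*((starRingEnd ℂ) (J 2 p))*Complex.I*((Real.sqrt 3 : ℝ) : ℂ) + ((3:ℂ)/2)*(J 1 p)*(J 3 p) + (-3:ℂ)*(J 1 p)*(J 3 p)*Complex.I*((Real.sqrt 3 : ℝ) : ℂ) + (-27:ℂ)*(J 1 p)*(J 2 p)*((starRingEnd ℂ) (J 0 p)) + (27:ℂ)*(J 1 p)*(J 2 p)*((starRingEnd ℂ) (J 0 p))*Complex.I*((Real.sqrt 3 : ℝ) : ℂ) + (-18:ℂ)*(J 1 p)^2*((starRingEnd ℂ) (J 1 p)) + (18:ℂ)*(J 1 p)^2*((starRingEnd ℂ) (J 1 p))*Complex.I*((Real.sqrt 3 : ℝ) : ℂ) + (54:ℂ)*(J 1 p)^2*((starRingEnd ℂ) (J 0 p))^2 + ((-3:ℂ)/2)*(J 0 p)*((starRingEnd ℂ) (J 4 p)) + (-27:ℂ)*(J 0 p)*((starRingEnd ℂ) (J 1 p))*((starRingEnd ℂ) (J 2 p)) + (-27:ℂ)*(J 0 p)*((starRingEnd ℂ) (J 1 p))*((starRingEnd ℂ) (J 2 p))*Complex.I*((Real.sqrt 3 : ℝ) : ℂ)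 + (-9:ℂ)*(J 0 p)*((starRingEnd ℂ) (J 0 p))*((starRingEnd ℂ) (J 3 p)) + (-9:ℂ)*(J 0 p)*((starRingEnd ℂ) (J 0 p))*((starRingEnd ℂ) (J 3 p))*Complex.I*((Real.sqrt 3 : ℝ) : ℂ) + (-9:ℂ)*(J 0 p)*(J 3 p)*((starRingEnd ℂ) (J 0 p)) + (9:ℂ)*(J 0 p)*(J 3 p)*((starRingEnd ℂ) (J 0 p))*Complex.I*((Real.sqrt 3 : ℝ) : ℂ) + (-18:ℂ)*(J 0 p)*(J 2 p)*((starRingEnd ℂ) (J 1 p)) + (18:ℂ)*(J 0 p)*(J 2 p)*((starRingEnd ℂ) (J 1 p))*Complex.I*((Real.sqrt 3 : ℝ) : ℂ) + (54:ℂ)*(J 0 p)*(J 2 p)*((starRingEnd ℂ) (J 0 p))^2 + (-9:ℂ)*(J 0 p)*(J 1 p)*((starRingEnd ℂ) (J 2 p)) + (9:ℂ)*(J 0 p)*(J 1 p)*((starRingEnd ℂ) (J 2 p))*Complex.I*((Real.sqrt 3 : ℝ) : ℂ) + (216:ℂ)*(J 0 p)*(J 1 p)*((starRingEnd ℂ)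 (J 0 p))*((starRingEnd ℂ) (J 1 p)) + (54:ℂ)*(J 0 p)^2*((starRingEnd ℂ) (J 1 p))^2 + (54:ℂ)*(J 0 p)^2*((starRingEnd ℂ) (J 0 p))*((starRingEnd ℂ) (J 2 p))) * Complex.I_sq
  rw [← Complex.re_ofReal_mul, ← Complex.re_ofReal_mul, ← Complex.add_re, ← Complex.add_re,
    key, Complex.zero_re]
end

section
/- Let ω = e^{2πi/3}, let 𝒩 ⊆ ℝ² be open, and let q : ℝ² → ℂ be smooth on 𝒩 and satisfy i q_t − (1/√3) q_xx + 2√3 \overline{q} \overline{q}_x = 0 on 𝒩. Define u(x,t) = −(9/2)|q(x,t)|² − 3 Re( ω q_x(x,t) ) and v(x,t) = −√3 Im( 6 q(x,t)³ − 3 q(x,t) \overline{q_x(x,t)} + 6 ω² q(x,t) q_x(x,t) + ω q_xx(x,t) ). Then u and v are smooth and real-valued on 𝒩 and satisfy the system v_t + (1/3) u_xxx + (4/3)(u²)_x = 0 and u_t = v_x on 𝒩. -/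
/- ## Auxiliary infrastructure -/


noncomputable def pdv {E : Type*} [NormedAddCommGroup E] [NormedSpace ℝ E]
    (w : ℝ × ℝ) (f : ℝ × ℝ → E) : ℝ × ℝ → E := fun p => fderiv ℝ f p w

lemma pdx_eq {E : Type*} [NormedAddCommGroup E] [NormedSpace ℝ E] (f : ℝ × ℝ → E) :
    pdx f = pdv (1, 0) f := rfl

lemma pdt_eq {E : Type*} [NormedAddCommGroup E] [NormedSpace ℝ E] (f : ℝ × ℝ → E) :
    pdt f = pdv (0, 1) f := rfl

section rules
variable {E : Type*} [NormedAddCommGroup E] [NormedSpace ℝ E]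
variable {N : Set (ℝ × ℝ)} {p : ℝ × ℝ} {f g : ℝ × ℝ → E} {w : ℝ × ℝ}

lemma ContDiffOn.pdv (hf : ContDiffOn ℝ (⊤ : ℕ∞) f N) (hN : IsOpen N) (w : ℝ × ℝ) :
    ContDiffOn ℝ (⊤ : ℕ∞) (pdv w f) N :=
  (ContinuousLinearMap.apply ℝ E w).contDiff.comp_contDiffOn
    (hf.fderiv_of_isOpen hN (by simp))

lemma ContDiffOn.diffAt (hf : ContDiffOn ℝ (⊤ : ℕ∞) f N) (hN : IsOpen N) (hp : p ∈ N) :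
    DifferentiableAt ℝ f p :=
  ((hf.contDiffAt (hN.mem_nhds hp)).differentiableAt (by simp))

lemma pdv_congr (hN : IsOpen N) (hfg : ∀ y ∈ N, f y = g y) (hp : p ∈ N) :
    pdv w f p = pdv w g p := by
  have h : f =ᶠ[nhds p] g := by
    filter_upwards [hN.mem_nhds hp] using hfg
  simp only [pdv, h.fderiv_eq]

lemma pdv_zero_fun : pdv w (fun _ => (0 : E)) p = 0 := by
  simp [pdv]

lemma pdv_add (hf : DifferentiableAt ℝ f p) (hg : DifferentiableAt ℝ g p) :
    pdv w (fun y => f y + g y) p = pdv w f p + pdv w g p := by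
  simp [pdv, fderiv_fun_add hf hg]

end rules

section crules
variable {𝔸 : Type*} [NormedCommRing 𝔸] [NormedAlgebra ℝ 𝔸]
variable {N : Set (ℝ × ℝ)} {p : ℝ × ℝ} {f g h : ℝ × ℝ → 𝔸} {w : ℝ × ℝ}

lemma pdv_mul (hf : DifferentiableAt ℝ f p) (hg : DifferentiableAt ℝ g p) :
    pdv w (fun y => f y * g y) p = pdv w f p * g p + f p * pdv w g p := by
  simp only [pdv, fderiv_fun_mul hf hg]
  simp only [ContinuousLinearMap.add_apply, ContinuousLinearMap.smul_apply, smul_eq_mul]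
  ring

lemma pdv_const_mul (c : 𝔸) (hf : DifferentiableAt ℝ f p) :
    pdv w (fun y => c * f y) p = c * pdv w f p := by
  simp [pdv, fderiv_const_mul hf c]

lemma pdv_cmul_mul (c : 𝔸) (hf : DifferentiableAt ℝ f p) (hg : DifferentiableAt ℝ g p) :
    pdv w (fun y => c * (f y * g y)) p
      = c * (pdv w f p * g p + f p * pdv w g p) := by
  rw [pdv_const_mul c (hf.fun_mul hg), pdv_mul hf hg]

lemma pdv_cmul_triple (c : 𝔸) (hf : DifferentiableAt ℝ f p) (hg : DifferentiableAt ℝ g p)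
    (hh : DifferentiableAt ℝ h p) :
    pdv w (fun y => c * (f y * (g y * h y))) p
      = c * (pdv w f p * (g p * h p)
          + f p * (pdv w g p * h p + g p * pdv w h p)) := by
  rw [pdv_cmul_mul c hf (hg.fun_mul hh), pdv_mul hg hh]

end crules

section cx
variable {N : Set (ℝ × ℝ)} {p : ℝ × ℝ} {f g : ℝ × ℝ → ℂ} {w : ℝ × ℝ}

lemma diffAt_conj (hf : DifferentiableAt ℝ f p) :
    DifferentiableAt ℝ (fun y => (starRingEnd ℂ) (f y)) p :=
  (Complex.conjCLE.toContinuousLinearMap.differentiableAt).comp p hf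

lemma pdv_conj (hf : DifferentiableAt ℝ f p) :
    pdv w (fun y => (starRingEnd ℂ) (f y)) p = (starRingEnd ℂ) (pdv w f p) := by
  have h := (Complex.conjCLE.toContinuousLinearMap.hasFDerivAt.comp p hf.hasFDerivAt)
  have h' : (fun y => (starRingEnd ℂ) (f y)) = (⇑Complex.conjCLE.toContinuousLinearMap ∘ f) := rfl
  rw [pdv]
  rw [h', h.fderiv]
  rfl

lemma pdv_re (hf : DifferentiableAt ℝ f p) :
    pdv w (fun y => (f y).re) p = (pdv w f p).re := by
  have h := (Complex.reCLM.hasFDerivAt.comp p hf.hasFDerivAt)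
  have h' : (fun y => (f y).re) = (⇑Complex.reCLM ∘ f) := rfl
  rw [pdv]
  rw [h', h.fderiv]
  rfl

lemma contDiffOn_conj (hf : ContDiffOn ℝ (⊤ : ℕ∞) f N) :
    ContDiffOn ℝ (⊤ : ℕ∞) (fun y => (starRingEnd ℂ) (f y)) N :=
  Complex.conjCLE.toContinuousLinearMap.contDiff.comp_contDiffOn hf

lemma pdv_cmul_mul_conj (c : ℂ) (hf : DifferentiableAt ℝ f p) (hg : DifferentiableAt ℝ g p) :
    pdv w (fun y => c * (f y * (starRingEnd ℂ) (g y))) p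
      = c * (pdv w f p * (starRingEnd ℂ) (g p)
          + f p * (starRingEnd ℂ) (pdv w g p)) := by
  rw [pdv_cmul_mul c hf (diffAt_conj hg), pdv_conj hg]

lemma pdv_cmul_conj_mul_conj (c : ℂ) (hf : DifferentiableAt ℝ f p) (hg : DifferentiableAt ℝ g p) :
    pdv w (fun y => c * ((starRingEnd ℂ) (f y) * (starRingEnd ℂ) (g y))) p
      = c * ((starRingEnd ℂ) (pdv w f p) * (starRingEnd ℂ) (g p)
          + (starRingEnd ℂ) (f p) * (starRingEnd ℂ) (pdv w g p)) := by
  rw [pdv_cmul_mul c (diffAt_conj hf) (diffAt_conj hg), pdv_conj hf, pdv_conj hg]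

end cx

section schwarz
variable {E : Type*} [NormedAddCommGroup E] [NormedSpace ℝ E]
variable {N : Set (ℝ × ℝ)} {p : ℝ × ℝ} {f : ℝ × ℝ → E}

lemma pdv_comm (hN : IsOpen N) (hf : ContDiffOn ℝ (⊤ : ℕ∞) f N) (hp : p ∈ N) (v w : ℝ × ℝ) :
    pdv v (pdv w f) p = pdv w (pdv v f) p := by
  have hsymm : IsSymmSndFDerivAt ℝ f p :=
    (hf.contDiffAt (hN.mem_nhds hp)).isSymmSndFDerivAt ((by rw [minSmoothness_of_isRCLikeNormedField]; exact WithTop.coe_le_coe.mpr le_top))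
  have hd : DifferentiableAt ℝ (fderiv ℝ f) p :=
    ((hf.fderiv_of_isOpen hN (m := 1) (by exact WithTop.coe_le_coe.mpr le_top)).contDiffAt (hN.mem_nhds hp)).differentiableAt one_ne_zero
  have key : ∀ a b : ℝ × ℝ, pdv a (pdv b f) p = fderiv ℝ (fderiv ℝ f) p a b := by
    intro a b
    have h1 : pdv b f = fun y => (ContinuousLinearMap.apply ℝ E b) (fderiv ℝ f y) := rfl
    have h2 := ((ContinuousLinearMap.apply ℝ E b).hasFDerivAt.comp p hd.hasFDerivAt)
    have h3 : (fun y => (ContinuousLinearMap.apply ℝ E b) (fderiv ℝ f y))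
        = (⇑(ContinuousLinearMap.apply ℝ E b) ∘ fderiv ℝ f) := rfl
    rw [pdv, h1, h3, h2.fderiv]
    rfl
  rw [key, key, hsymm v w]

end schwarz

lemma hωre : ω.re = -(1/2) := by
  have harg : (2 * Real.pi * Complex.I / 3) = ((2 * Real.pi / 3 : ℝ) : ℂ) * Complex.I := by
    push_cast; ring
  rw [ω, harg, Complex.exp_ofReal_mul_I_re]
  have h : 2 * Real.pi / 3 = Real.pi - Real.pi / 3 := by ring
  rw [h, Real.cos_pi_sub, Real.cos_pi_div_three]

lemma hωim : ω.im = Real.sqrt 3 / 2 := by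
  have harg : (2 * Real.pi * Complex.I / 3) = ((2 * Real.pi / 3 : ℝ) : ℂ) * Complex.I := by
    push_cast; ring
  rw [ω, harg, Complex.exp_ofReal_mul_I_im]
  have h : 2 * Real.pi / 3 = Real.pi - Real.pi / 3 := by ring
  rw [h, Real.sin_pi_sub, Real.sin_pi_div_three]


/- ## Main theorem -/

/-- If `q` is smooth on an open set `𝒩` and satisfies
`i q_t - (1/√3) q_xx + 2√3 q̄ q̄_x = 0` there, then
`u = -(9/2)|q|² - 3 Re(ω q_x)` and
`v = -√3 Im(6q³ - 3q q̄_x + 6ω² q q_x + ω q_xx)`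
are smooth real-valued functions satisfying the Boussinesq system
`v_t + (1/3) u_xxx + (4/3)(u²)_x = 0`, `u_t = v_x` on `𝒩`. -/
theorem miura_boussinesq_system (N : Set (ℝ × ℝ)) (hN : IsOpen N)
    (q : ℝ × ℝ → ℂ) (hq : ContDiffOn ℝ (⊤ : ℕ∞) q N)
    (heq : ∀ p ∈ N,
      Complex.I * pdt q p - (1 / (Real.sqrt 3 : ℂ)) * pdx (pdx q) p
        + 2 * (Real.sqrt 3 : ℂ) * (starRingEnd ℂ) (q p) * (starRingEnd ℂ) (pdx q p) = 0)
    (u v : ℝ × ℝ → ℝ)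
    (hu : u = fun p => -(9 / 2) * ‖q p‖ ^ 2 - 3 * (ω * pdx q p).re)
    (hv : v = fun p => -Real.sqrt 3 *
      (6 * q p ^ 3 - 3 * q p * (starRingEnd ℂ) (pdx q p)
        + 6 * ω ^ 2 * q p * pdx q p + ω * pdx (pdx q) p).im) :
    ContDiffOn ℝ (⊤ : ℕ∞) u N ∧ ContDiffOn ℝ (⊤ : ℕ∞) v N ∧
    (∀ p ∈ N,
      pdt v p + (1 / 3) * pdx (pdx (pdx u)) p
        + (4 / 3) * pdx (fun p' => u p' ^ 2) p = 0) ∧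
    (∀ p ∈ N, pdt u p = pdx v p) := by
  have hs3 : Real.sqrt 3 ^ 2 = 3 := Real.sq_sqrt (by norm_num)
  have hω2re : (ω ^ 2).re = -(1/2) := by
    rw [sq, Complex.mul_re, hωre, hωim]; linear_combination (-(1/4)) * hs3
  have hω2im : (ω ^ 2).im = -(Real.sqrt 3 / 2) := by
    rw [sq, Complex.mul_im, hωre, hωim]; ring
  simp only [pdx_eq, pdt_eq] at heq hu hv ⊢
  -- smoothness of the jets
  have sq1 : ContDiffOn ℝ (⊤ : ℕ∞) (pdv (1,0) q) N := hq.pdv hN _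
  have sq2 : ContDiffOn ℝ (⊤ : ℕ∞) (pdv (1,0) (pdv (1,0) q)) N := sq1.pdv hN _
  have sq3 : ContDiffOn ℝ (⊤ : ℕ∞) (pdv (1,0) (pdv (1,0) (pdv (1,0) q))) N := sq2.pdv hN _
  have sq4 : ContDiffOn ℝ (⊤ : ℕ∞) (pdv (1,0) (pdv (1,0) (pdv (1,0) (pdv (1,0) q)))) N := sq3.pdv hN _
  have sqt : ContDiffOn ℝ (⊤ : ℕ∞) (pdv (0,1) q) N := hq.pdv hN _
  have sqt1 : ContDiffOn ℝ (⊤ : ℕ∞) (pdv (0,1) (pdv (1,0) q)) N := sq1.pdv hN _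
  -- differentiability helpers
  have dq : ∀ {y}, y ∈ N → DifferentiableAt ℝ q y := fun hy => hq.diffAt hN hy
  have dq1 : ∀ {y}, y ∈ N → DifferentiableAt ℝ (pdv (1,0) q) y := fun hy => sq1.diffAt hN hy
  have dq2 : ∀ {y}, y ∈ N → DifferentiableAt ℝ (pdv (1,0) (pdv (1,0) q)) y :=
    fun hy => sq2.diffAt hN hy
  have dq3 : ∀ {y}, y ∈ N → DifferentiableAt ℝ (pdv (1,0) (pdv (1,0) (pdv (1,0) q))) y :=
    fun hy => sq3.diffAt hN hy
  have dqt : ∀ {y}, y ∈ N → DifferentiableAt ℝ (pdv (0,1) q) y := fun hy => sqt.diffAt hN hy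
  have dqt1 : ∀ {y}, y ∈ N → DifferentiableAt ℝ (pdv (0,1) (pdv (1,0) q)) y :=
    fun hy => sqt1.diffAt hN hy
  -- representation of u and v as real parts of smooth complex functions
  have hUeq : u = fun y => (((-(9/2):ℝ):ℂ) * (q y * (starRingEnd ℂ) (q y))
      + ((-3:ℝ):ℂ) * ω * pdv (1,0) q y).re := by
    rw [hu]; funext y
    simp only [Complex.add_re, Complex.mul_re, Complex.mul_im, Complex.neg_re, Complex.neg_im,
      Complex.conj_re, Complex.conj_im, Complex.ofReal_re, Complex.ofReal_im,
      Complex.sq_norm, Complex.normSq_apply]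
    ring
  have hVeq : v = fun y => (((Real.sqrt 3:ℝ):ℂ) * Complex.I *
      (((6:ℝ):ℂ) * (q y * (q y * q y)) + ((-3:ℝ):ℂ) * (q y * (starRingEnd ℂ) (pdv (1,0) q y))
        + ((6:ℝ):ℂ) * ω^2 * (q y * pdv (1,0) q y) + ω * pdv (1,0) (pdv (1,0) q) y)).re := by
    rw [hv]; funext y
    have hpow : q y ^ 3 = q y * (q y * q y) := by ring
    rw [hpow]
    simp only [Complex.add_re, Complex.add_im, Complex.sub_re, Complex.sub_im,
      Complex.mul_re, Complex.mul_im, Complex.neg_re, Complex.neg_im,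
      Complex.conj_re, Complex.conj_im, Complex.ofReal_re, Complex.ofReal_im,
      Complex.I_re, Complex.I_im, Complex.re_ofNat, Complex.im_ofNat]
    ring
  -- first x-derivative of u
  have dUfun : ∀ {y}, y ∈ N → DifferentiableAt ℝ (fun z => ((-(9/2):ℝ):ℂ) *
      (q z * (starRingEnd ℂ) (q z)) + ((-3:ℝ):ℂ) * ω * pdv (1,0) q z) y := by
    intro y hy
    exact (((dq hy).mul (diffAt_conj (dq hy))).const_mul _).add ((dq1 hy).const_mul _)
  have eW1 : ∀ y ∈ N, pdv (1,0) u y =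
      (((-(9/2):ℝ):ℂ) * (pdv (1,0) q y * (starRingEnd ℂ) (q y))
        + ((-(9/2):ℝ):ℂ) * (q y * (starRingEnd ℂ) (pdv (1,0) q y))
        + ((-3:ℝ):ℂ) * ω * pdv (1,0) (pdv (1,0) q) y).re := by
    intro y hy
    rw [hUeq, pdv_re (dUfun hy)]
    congr 1
    rw [pdv_add (((dq hy).fun_mul (diffAt_conj (dq hy))).const_mul _) ((dq1 hy).const_mul _),
      pdv_cmul_mul_conj _ (dq hy) (dq hy), pdv_const_mul _ (dq1 hy)]
    ring
  -- second x-derivative of u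
  have dW1fun : ∀ {y}, y ∈ N → DifferentiableAt ℝ (fun z =>
      ((-(9/2):ℝ):ℂ) * (pdv (1,0) q z * (starRingEnd ℂ) (q z))
        + ((-(9/2):ℝ):ℂ) * (q z * (starRingEnd ℂ) (pdv (1,0) q z))
        + ((-3:ℝ):ℂ) * ω * pdv (1,0) (pdv (1,0) q) z) y := by
    intro y hy
    exact ((((dq1 hy).mul (diffAt_conj (dq hy))).const_mul _).add
      (((dq hy).mul (diffAt_conj (dq1 hy))).const_mul _)).add ((dq2 hy).const_mul _)
  have eW2 : ∀ y ∈ N, pdv (1,0) (pdv (1,0) u) y =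
      (((-(9/2):ℝ):ℂ) * (pdv (1,0) (pdv (1,0) q) y * (starRingEnd ℂ) (q y))
        + ((-9:ℝ):ℂ) * (pdv (1,0) q y * (starRingEnd ℂ) (pdv (1,0) q y))
        + ((-(9/2):ℝ):ℂ) * (q y * (starRingEnd ℂ) (pdv (1,0) (pdv (1,0) q) y))
        + ((-3:ℝ):ℂ) * ω * pdv (1,0) (pdv (1,0) (pdv (1,0) q)) y).re := by
    intro y hy
    rw [pdv_congr hN eW1 hy, pdv_re (dW1fun hy)]
    congr 1
    rw [pdv_add ((((dq1 hy).fun_mul (diffAt_conj (dq hy))).const_mul _).fun_add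
          (((dq hy).fun_mul (diffAt_conj (dq1 hy))).const_mul _)) ((dq2 hy).const_mul _),
      pdv_add (((dq1 hy).fun_mul (diffAt_conj (dq hy))).const_mul _)
        (((dq hy).fun_mul (diffAt_conj (dq1 hy))).const_mul _),
      pdv_cmul_mul_conj _ (dq1 hy) (dq hy), pdv_cmul_mul_conj _ (dq hy) (dq1 hy),
      pdv_const_mul _ (dq2 hy)]
    push_cast
    ring
  -- third x-derivative of u, at the point p only
  have dW2fun : ∀ {y}, y ∈ N → DifferentiableAt ℝ (fun z =>
      ((-(9/2):ℝ):ℂ) * (pdv (1,0) (pdv (1,0) q) z * (starRingEnd ℂ) (q z))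
        + ((-9:ℝ):ℂ) * (pdv (1,0) q z * (starRingEnd ℂ) (pdv (1,0) q z))
        + ((-(9/2):ℝ):ℂ) * (q z * (starRingEnd ℂ) (pdv (1,0) (pdv (1,0) q) z))
        + ((-3:ℝ):ℂ) * ω * pdv (1,0) (pdv (1,0) (pdv (1,0) q)) z) y := by
    intro y hy
    exact (((((dq2 hy).mul (diffAt_conj (dq hy))).const_mul _).add
      (((dq1 hy).mul (diffAt_conj (dq1 hy))).const_mul _)).add
      (((dq hy).mul (diffAt_conj (dq2 hy))).const_mul _)).add ((dq3 hy).const_mul _)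
  have eW3 : ∀ p ∈ N, pdv (1,0) (pdv (1,0) (pdv (1,0) u)) p =
      (((-(9/2):ℝ):ℂ) * (pdv (1,0) (pdv (1,0) (pdv (1,0) q)) p * (starRingEnd ℂ) (q p))
        + ((-(27/2):ℝ):ℂ) * (pdv (1,0) (pdv (1,0) q) p * (starRingEnd ℂ) (pdv (1,0) q p))
        + ((-(27/2):ℝ):ℂ) * (pdv (1,0) q p * (starRingEnd ℂ) (pdv (1,0) (pdv (1,0) q) p))
        + ((-(9/2):ℝ):ℂ) * (q p * (starRingEnd ℂ) (pdv (1,0) (pdv (1,0) (pdv (1,0) q)) p))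
        + ((-3:ℝ):ℂ) * ω * pdv (1,0) (pdv (1,0) (pdv (1,0) (pdv (1,0) q))) p).re := by
    intro y hy
    rw [pdv_congr hN eW2 hy, pdv_re (dW2fun hy)]
    congr 1
    rw [pdv_add ((((((dq2 hy).fun_mul (diffAt_conj (dq hy))).const_mul _).fun_add
          (((dq1 hy).fun_mul (diffAt_conj (dq1 hy))).const_mul _)).fun_add
          (((dq hy).fun_mul (diffAt_conj (dq2 hy))).const_mul _))) ((dq3 hy).const_mul _),
      pdv_add ((((dq2 hy).fun_mul (diffAt_conj (dq hy))).const_mul _).fun_add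
          (((dq1 hy).fun_mul (diffAt_conj (dq1 hy))).const_mul _))
        (((dq hy).fun_mul (diffAt_conj (dq2 hy))).const_mul _),
      pdv_add (((dq2 hy).fun_mul (diffAt_conj (dq hy))).const_mul _)
        (((dq1 hy).fun_mul (diffAt_conj (dq1 hy))).const_mul _),
      pdv_cmul_mul_conj _ (dq2 hy) (dq hy), pdv_cmul_mul_conj _ (dq1 hy) (dq1 hy),
      pdv_cmul_mul_conj _ (dq hy) (dq2 hy), pdv_const_mul _ (dq3 hy)]
    push_cast
    ring
  -- t-derivative of u
  have eTU : ∀ p ∈ N, pdv (0,1) u p =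
      (((-(9/2):ℝ):ℂ) * (pdv (0,1) q p * (starRingEnd ℂ) (q p))
        + ((-(9/2):ℝ):ℂ) * (q p * (starRingEnd ℂ) (pdv (0,1) q p))
        + ((-3:ℝ):ℂ) * ω * pdv (0,1) (pdv (1,0) q) p).re := by
    intro y hy
    rw [hUeq, pdv_re (dUfun hy)]
    congr 1
    rw [pdv_add (((dq hy).fun_mul (diffAt_conj (dq hy))).const_mul _) ((dq1 hy).const_mul _),
      pdv_cmul_mul_conj _ (dq hy) (dq hy), pdv_const_mul _ (dq1 hy)]
    ring
  -- differentiability of the complex representative of v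
  have dVfun : ∀ {y}, y ∈ N → DifferentiableAt ℝ (fun z => ((Real.sqrt 3:ℝ):ℂ) * Complex.I *
      (((6:ℝ):ℂ) * (q z * (q z * q z)) + ((-3:ℝ):ℂ) * (q z * (starRingEnd ℂ) (pdv (1,0) q z))
        + ((6:ℝ):ℂ) * ω^2 * (q z * pdv (1,0) q z) + ω * pdv (1,0) (pdv (1,0) q) z)) y := by
    intro y hy
    exact (((((dq hy).mul ((dq hy).mul (dq hy))).const_mul _).add
      (((dq hy).mul (diffAt_conj (dq1 hy))).const_mul _)).add
      (((dq hy).mul (dq1 hy)).const_mul _)).add ((dq2 hy).const_mul _) |>.const_mul _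
  -- generic derivative of v in an arbitrary direction
  have eDV : ∀ w : ℝ × ℝ, ∀ p ∈ N, pdv w v p =
      (((Real.sqrt 3:ℝ):ℂ) * Complex.I *
        (((18:ℝ):ℂ) * (pdv w q p * (q p * q p))
          + ((-3:ℝ):ℂ) * (pdv w q p * (starRingEnd ℂ) (pdv (1,0) q p))
          + ((-3:ℝ):ℂ) * (q p * (starRingEnd ℂ) (pdv w (pdv (1,0) q) p))
          + ((6:ℝ):ℂ) * ω^2 * (pdv w q p * pdv (1,0) q p)
          + ((6:ℝ):ℂ) * ω^2 * (q p * pdv w (pdv (1,0) q) p)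
          + ω * pdv w (pdv (1,0) (pdv (1,0) q)) p)).re := by
    intro w y hy
    rw [hVeq, pdv_re (dVfun hy)]
    congr 1
    have hd1 : DifferentiableAt ℝ (fun z => ((6:ℝ):ℂ) * (q z * (q z * q z))) y :=
      ((dq hy).mul ((dq hy).mul (dq hy))).const_mul _
    have hd2 : DifferentiableAt ℝ
        (fun z => ((-3:ℝ):ℂ) * (q z * (starRingEnd ℂ) (pdv (1,0) q z))) y :=
      ((dq hy).mul (diffAt_conj (dq1 hy))).const_mul _
    have hd3 : DifferentiableAt ℝ (fun z => ((6:ℝ):ℂ) * ω^2 * (q z * pdv (1,0) q z)) y :=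
      ((dq hy).mul (dq1 hy)).const_mul _
    have hd4 : DifferentiableAt ℝ (fun z => ω * pdv (1,0) (pdv (1,0) q) z) y :=
      (dq2 hy).const_mul _
    rw [pdv_const_mul _ (((hd1.fun_add hd2).fun_add hd3).fun_add hd4),
      pdv_add ((hd1.fun_add hd2).fun_add hd3) hd4, pdv_add (hd1.fun_add hd2) hd3, pdv_add hd1 hd2,
      pdv_cmul_triple _ (dq hy) (dq hy) (dq hy),
      pdv_cmul_mul_conj _ (dq hy) (dq1 hy),
      pdv_cmul_mul _ (dq hy) (dq1 hy), pdv_const_mul _ (dq2 hy)]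
    push_cast
    ring
  -- the PDE in a normal form
  have hF0 : ∀ y ∈ N, Complex.I * pdv (0,1) q y
      + (-(1 / ((Real.sqrt 3:ℝ):ℂ))) * pdv (1,0) (pdv (1,0) q) y
      + (2 * ((Real.sqrt 3:ℝ):ℂ)) * ((starRingEnd ℂ) (q y) * (starRingEnd ℂ) (pdv (1,0) q y))
      = 0 := by
    intro y hy
    linear_combination heq y hy
  have dFfun : ∀ {y}, y ∈ N → DifferentiableAt ℝ (fun z => Complex.I * pdv (0,1) q z
      + (-(1 / ((Real.sqrt 3:ℝ):ℂ))) * pdv (1,0) (pdv (1,0) q) z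
      + (2 * ((Real.sqrt 3:ℝ):ℂ)) *
        ((starRingEnd ℂ) (q z) * (starRingEnd ℂ) (pdv (1,0) q z))) y := by
    intro y hy
    exact (((dqt hy).const_mul _).add ((dq2 hy).const_mul _)).add
      (((diffAt_conj (dq hy)).mul (diffAt_conj (dq1 hy))).const_mul _)
  -- first x-derivative of the PDE
  have hF1 : ∀ y ∈ N, Complex.I * pdv (0,1) (pdv (1,0) q) y
      + (-(1 / ((Real.sqrt 3:ℝ):ℂ))) * pdv (1,0) (pdv (1,0) (pdv (1,0) q)) y
      + (2 * ((Real.sqrt 3:ℝ):ℂ)) *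
          ((starRingEnd ℂ) (pdv (1,0) q y) * (starRingEnd ℂ) (pdv (1,0) q y))
      + (2 * ((Real.sqrt 3:ℝ):ℂ)) *
          ((starRingEnd ℂ) (q y) * (starRingEnd ℂ) (pdv (1,0) (pdv (1,0) q) y))
      = 0 := by
    intro y hy
    have h0 : pdv (1,0) (fun z => Complex.I * pdv (0,1) q z
        + (-(1 / ((Real.sqrt 3:ℝ):ℂ))) * pdv (1,0) (pdv (1,0) q) z
        + (2 * ((Real.sqrt 3:ℝ):ℂ)) *
          ((starRingEnd ℂ) (q z) * (starRingEnd ℂ) (pdv (1,0) q z))) y = 0 := by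
      rw [pdv_congr hN hF0 hy]
      exact pdv_zero_fun
    rw [pdv_add (((dqt hy).const_mul _).fun_add ((dq2 hy).const_mul _))
        (((diffAt_conj (dq hy)).fun_mul (diffAt_conj (dq1 hy))).const_mul _),
      pdv_add ((dqt hy).const_mul _) ((dq2 hy).const_mul _),
      pdv_const_mul _ (dqt hy), pdv_const_mul _ (dq2 hy),
      pdv_cmul_conj_mul_conj _ (dq hy) (dq1 hy),
      pdv_comm hN hq hy (1,0) (0,1)] at h0
    linear_combination h0
  have dF1fun : ∀ {y}, y ∈ N → DifferentiableAt ℝ (fun z =>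
      Complex.I * pdv (0,1) (pdv (1,0) q) z
      + (-(1 / ((Real.sqrt 3:ℝ):ℂ))) * pdv (1,0) (pdv (1,0) (pdv (1,0) q)) z
      + (2 * ((Real.sqrt 3:ℝ):ℂ)) *
          ((starRingEnd ℂ) (pdv (1,0) q z) * (starRingEnd ℂ) (pdv (1,0) q z))
      + (2 * ((Real.sqrt 3:ℝ):ℂ)) *
          ((starRingEnd ℂ) (q z) * (starRingEnd ℂ) (pdv (1,0) (pdv (1,0) q) z))) y := by
    intro y hy
    exact ((((dqt1 hy).const_mul _).add ((dq3 hy).const_mul _)).add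
      (((diffAt_conj (dq1 hy)).mul (diffAt_conj (dq1 hy))).const_mul _)).add
      (((diffAt_conj (dq hy)).mul (diffAt_conj (dq2 hy))).const_mul _)
  -- second x-derivative of the PDE, at the point p only
  have hF2 : ∀ p ∈ N, Complex.I * pdv (0,1) (pdv (1,0) (pdv (1,0) q)) p
      + (-(1 / ((Real.sqrt 3:ℝ):ℂ))) * pdv (1,0) (pdv (1,0) (pdv (1,0) (pdv (1,0) q))) p
      + (2 * ((Real.sqrt 3:ℝ):ℂ)) * (((3:ℝ):ℂ) *
          ((starRingEnd ℂ) (pdv (1,0) q p) * (starRingEnd ℂ) (pdv (1,0) (pdv (1,0) q) p)))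
      + (2 * ((Real.sqrt 3:ℝ):ℂ)) *
          ((starRingEnd ℂ) (q p) * (starRingEnd ℂ) (pdv (1,0) (pdv (1,0) (pdv (1,0) q)) p))
      = 0 := by
    intro y hy
    have h0 : pdv (1,0) (fun z => Complex.I * pdv (0,1) (pdv (1,0) q) z
        + (-(1 / ((Real.sqrt 3:ℝ):ℂ))) * pdv (1,0) (pdv (1,0) (pdv (1,0) q)) z
        + (2 * ((Real.sqrt 3:ℝ):ℂ)) *
          ((starRingEnd ℂ) (pdv (1,0) q z) * (starRingEnd ℂ) (pdv (1,0) q z))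
        + (2 * ((Real.sqrt 3:ℝ):ℂ)) *
          ((starRingEnd ℂ) (q z) * (starRingEnd ℂ) (pdv (1,0) (pdv (1,0) q) z))) y = 0 := by
      rw [pdv_congr hN hF1 hy]
      exact pdv_zero_fun
    rw [pdv_add ((((dqt1 hy).const_mul _).fun_add ((dq3 hy).const_mul _)).fun_add
          (((diffAt_conj (dq1 hy)).fun_mul (diffAt_conj (dq1 hy))).const_mul _))
        (((diffAt_conj (dq hy)).fun_mul (diffAt_conj (dq2 hy))).const_mul _),
      pdv_add (((dqt1 hy).const_mul _).fun_add ((dq3 hy).const_mul _))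
        (((diffAt_conj (dq1 hy)).fun_mul (diffAt_conj (dq1 hy))).const_mul _),
      pdv_add ((dqt1 hy).const_mul _) ((dq3 hy).const_mul _),
      pdv_const_mul _ (dqt1 hy), pdv_const_mul _ (dq3 hy),
      pdv_cmul_conj_mul_conj _ (dq1 hy) (dq1 hy),
      pdv_cmul_conj_mul_conj _ (dq hy) (dq2 hy),
      pdv_comm hN sq1 hy (1,0) (0,1)] at h0
    push_cast
    linear_combination h0
  -- solve for the time derivatives
  have hS0 : ((Real.sqrt 3:ℝ):ℂ) ≠ 0 := by
    simp only [ne_eq, Complex.ofReal_eq_zero]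
    positivity
  have hS2c : ((Real.sqrt 3:ℝ):ℂ)^2 = 3 := by
    rw [← Complex.ofReal_pow, hs3]
    norm_num
  have hSt : ((Real.sqrt 3:ℝ):ℂ) * (1/((Real.sqrt 3:ℝ):ℂ)) = 1 := mul_one_div_cancel hS0
  have hB : ∀ p ∈ N, pdv (0,1) q p = ((-(1/3):ℝ):ℂ) * (Complex.I * (((Real.sqrt 3:ℝ):ℂ) *
      (pdv (1,0) (pdv (1,0) q) p - ((6:ℝ):ℂ) *
        ((starRingEnd ℂ) (q p) * (starRingEnd ℂ) (pdv (1,0) q p))))) := by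
    intro p hp
    have h := hF0 p hp
    push_cast at h ⊢
    linear_combination (-Complex.I) * h + (pdv (0,1) q p) * Complex.I_sq
      + (-(1/3) * Complex.I * pdv (1,0) (pdv (1,0) q) p * ((Real.sqrt 3:ℝ):ℂ)) * hSt
      + ((1/3) * Complex.I * pdv (1,0) (pdv (1,0) q) p * (1/((Real.sqrt 3:ℝ):ℂ))) * hS2c
  have hB1 : ∀ p ∈ N, pdv (0,1) (pdv (1,0) q) p
      = ((-(1/3):ℝ):ℂ) * (Complex.I * (((Real.sqrt 3:ℝ):ℂ) *
      (pdv (1,0) (pdv (1,0) (pdv (1,0) q)) p - ((6:ℝ):ℂ) *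
        ((starRingEnd ℂ) (pdv (1,0) q p) * (starRingEnd ℂ) (pdv (1,0) q p)
          + (starRingEnd ℂ) (q p) * (starRingEnd ℂ) (pdv (1,0) (pdv (1,0) q) p))))) := by
    intro p hp
    have h := hF1 p hp
    push_cast at h ⊢
    linear_combination (-Complex.I) * h + (pdv (0,1) (pdv (1,0) q) p) * Complex.I_sq
      + (-(1/3) * Complex.I * pdv (1,0) (pdv (1,0) (pdv (1,0) q)) p
          * ((Real.sqrt 3:ℝ):ℂ)) * hSt
      + ((1/3) * Complex.I * pdv (1,0) (pdv (1,0) (pdv (1,0) q)) p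
          * (1/((Real.sqrt 3:ℝ):ℂ))) * hS2c
  have hB2 : ∀ p ∈ N, pdv (0,1) (pdv (1,0) (pdv (1,0) q)) p
      = ((-(1/3):ℝ):ℂ) * (Complex.I * (((Real.sqrt 3:ℝ):ℂ) *
      (pdv (1,0) (pdv (1,0) (pdv (1,0) (pdv (1,0) q)))  p - ((6:ℝ):ℂ) *
        (((3:ℝ):ℂ) * ((starRingEnd ℂ) (pdv (1,0) q p)
            * (starRingEnd ℂ) (pdv (1,0) (pdv (1,0) q) p))
          + (starRingEnd ℂ) (q p)
            * (starRingEnd ℂ) (pdv (1,0) (pdv (1,0) (pdv (1,0) q)) p))))) := by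
    intro p hp
    have h := hF2 p hp
    push_cast at h ⊢
    linear_combination (-Complex.I) * h + (pdv (0,1) (pdv (1,0) (pdv (1,0) q)) p) * Complex.I_sq
      + (-(1/3) * Complex.I * pdv (1,0) (pdv (1,0) (pdv (1,0) (pdv (1,0) q))) p
          * ((Real.sqrt 3:ℝ):ℂ)) * hSt
      + ((1/3) * Complex.I * pdv (1,0) (pdv (1,0) (pdv (1,0) (pdv (1,0) q))) p
          * (1/((Real.sqrt 3:ℝ):ℂ))) * hS2c
  -- smoothness of u and v
  have cdu : ContDiffOn ℝ (⊤ : ℕ∞) u N := by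
    rw [hUeq]
    exact Complex.reCLM.contDiff.comp_contDiffOn
      ((contDiffOn_const.mul (hq.mul (contDiffOn_conj hq))).add (contDiffOn_const.mul sq1))
  have cdv : ContDiffOn ℝ (⊤ : ℕ∞) v N := by
    rw [hVeq]
    exact Complex.reCLM.contDiff.comp_contDiffOn
      (contDiffOn_const.mul
        ((((contDiffOn_const.mul (hq.mul (hq.mul hq))).add
            (contDiffOn_const.mul (hq.mul (contDiffOn_conj sq1)))).add
          (contDiffOn_const.mul (hq.mul sq1))).add (contDiffOn_const.mul sq2)))
  refine ⟨cdu, cdv, ?_, ?_⟩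
  · -- the first Boussinesq equation
    intro p hp
    have exu2 : pdv (1,0) (fun p' => u p' ^ 2) p = 2 * u p * pdv (1,0) u p := by
      have hsq : (fun p' : ℝ × ℝ => u p' ^ 2) = fun p' => u p' * u p' := by
        funext z; ring
      rw [hsq, pdv_mul (cdu.diffAt hN hp) (cdu.diffAt hN hp)]
      ring
    rw [eDV (0,1) p hp, eW3 p hp, exu2, eW1 p hp, hUeq, hB p hp, hB1 p hp, hB2 p hp]
    simp only [Complex.add_re, Complex.add_im, Complex.sub_re, Complex.sub_im,
      Complex.neg_re, Complex.neg_im, Complex.mul_re, Complex.mul_im,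
      Complex.conj_re, Complex.conj_im, Complex.I_re, Complex.I_im,
      Complex.ofReal_re, Complex.ofReal_im, hωre, hωim, hω2re, hω2im]
    linear_combination ((-1/6) * ((pdv (1,0) (pdv (1,0) (pdv (1,0) (pdv (1,0) q))) p).im) * (Real.sqrt 3)
        + (-1/6) * ((pdv (1,0) (pdv (1,0) (pdv (1,0) (pdv (1,0) q))) p).re)
        + (3) * ((pdv (1,0) q p).im) * ((pdv (1,0) (pdv (1,0) q) p).im)
        + (-2) * ((pdv (1,0) q p).im) * ((pdv (1,0) (pdv (1,0) q) p).re) * (Real.sqrt 3)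
        + (-2) * ((pdv (1,0) q p).re) * ((pdv (1,0) (pdv (1,0) q) p).im) * (Real.sqrt 3)
        + (1) * ((pdv (1,0) q p).re) * ((pdv (1,0) (pdv (1,0) q) p).re)
        + (1) * ((q p).im) * ((pdv (1,0) (pdv (1,0) (pdv (1,0) q)) p).im)
        + (12) * ((q p).im) * ((pdv (1,0) q p).im)^2 * (Real.sqrt 3)
        + (12) * ((q p).im) * ((pdv (1,0) q p).re) * ((pdv (1,0) q p).im)
        + (6) * ((q p).im)^2 * ((pdv (1,0) (pdv (1,0) q) p).im) * (Real.sqrt 3)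
        + (6) * ((q p).im)^2 * ((pdv (1,0) (pdv (1,0) q) p).re)
        + (-36) * ((q p).im)^3 * ((pdv (1,0) q p).im)
        + (1) * ((q p).re) * ((pdv (1,0) (pdv (1,0) (pdv (1,0) q)) p).re)
        + (12) * ((q p).re) * ((pdv (1,0) q p).re) * ((pdv (1,0) q p).im) * (Real.sqrt 3)
        + (12) * ((q p).re) * ((pdv (1,0) q p).re)^2
        + (-36) * ((q p).re) * ((q p).im)^2 * ((pdv (1,0) q p).re)
        + (6) * ((q p).re)^2 * ((pdv (1,0) (pdv (1,0) q) p).im) * (Real.sqrt 3)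
        + (6) * ((q p).re)^2 * ((pdv (1,0) (pdv (1,0) q) p).re)
        + (-36) * ((q p).re)^2 * ((q p).im) * ((pdv (1,0) q p).im)
        + (-36) * ((q p).re)^3 * ((pdv (1,0) q p).re)) * hs3
  · -- the second Boussinesq equation
    intro p hp
    rw [eTU p hp, eDV (1,0) p hp, hB p hp, hB1 p hp]
    simp only [Complex.add_re, Complex.add_im, Complex.sub_re, Complex.sub_im,
      Complex.neg_re, Complex.neg_im, Complex.mul_re, Complex.mul_im,
      Complex.conj_re, Complex.conj_im, Complex.I_re, Complex.I_im,
      Complex.ofReal_re, Complex.ofReal_im, hωre, hωim, hω2re, hω2im]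
    ring
end

section
/- Let ω = e^{2πi/3}, J = diag(ω, ω², 1), and let q : ℝ² → ℂ be smooth. For (x,t) ∈ ℝ² and k ∈ ℂ define the 3×3 complex matrices 𝒰(x,t) = [[0, (1−ω²)\overline{q}, (1−ω)q], [(1−ω)q, 0, (1−ω²)\overline{q}], [(1−ω²)\overline{q}, (1−ω)q, 0]] and 𝒱(x,t,k) = k·[[0, (ω²−1)\overline{q}, (1−ω²)q], [(ω−1)q, 0, (1−ω)\overline{q}], [(ω−ω²)\overline{q}, (ω²−ω)q, 0]] + (\overline{q}_x − 3q²)·[[0,ω,0],[0,0,ω],[ω,0,0]] + (q_x − 3\overline{q}²)·[[0,0,ω²],[ω²,0,0],[0,ω²,0]], where q, q_x, \overline{q}, \overline{q}_x are evaluated at (x,t). Then q satisfies i q_t − (1/√3) q_xx + 2√3 \overline{q} \overline{q}_x = 0 on ℝ² if and only if the zero-curvature equation ∂_t 𝒰 − ∂_x 𝒱 + [kJ + 𝒰, k²J² + 𝒱] = 0 holds for all (x,t) ∈ ℝ² and all k ∈ ℂ, where [A,B] = AB − BA. -/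
/-- J = diag(ω, ω², 1) -/
noncomputable def J : Matrix (Fin 3) (Fin 3) ℂ := Matrix.diagonal ![ω, ω ^ 2, 1]

/-- The matrix 𝒰 of the Lax pair for equation (E1). -/
noncomputable def Umat (q : ℝ × ℝ → ℂ) (p : ℝ × ℝ) : Matrix (Fin 3) (Fin 3) ℂ :=
  !![0, (1 - ω ^ 2) * (starRingEnd ℂ) (q p), (1 - ω) * q p;
     (1 - ω) * q p, 0, (1 - ω ^ 2) * (starRingEnd ℂ) (q p);
     (1 - ω ^ 2) * (starRingEnd ℂ) (q p), (1 - ω) * q p, 0]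

/-- The matrix 𝒱 of the Lax pair for equation (E1). -/
noncomputable def Vmat (q : ℝ × ℝ → ℂ) (k : ℂ) (p : ℝ × ℝ) : Matrix (Fin 3) (Fin 3) ℂ :=
  k • !![0, (ω ^ 2 - 1) * (starRingEnd ℂ) (q p), (1 - ω ^ 2) * q p;
         (ω - 1) * q p, 0, (1 - ω) * (starRingEnd ℂ) (q p);
         (ω - ω ^ 2) * (starRingEnd ℂ) (q p), (ω ^ 2 - ω) * q p, 0]
  + ((starRingEnd ℂ) (pdx q p) - 3 * q p ^ 2) • !![0, ω, 0; 0, 0, ω; ω, 0, 0]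
  + (pdx q p - 3 * (starRingEnd ℂ) (q p) ^ 2) • !![0, 0, ω ^ 2; ω ^ 2, 0, 0; 0, ω ^ 2, 0]

/-- Entrywise time derivative of a matrix-valued function. -/
noncomputable def matPdt (F : ℝ × ℝ → Matrix (Fin 3) (Fin 3) ℂ) (p : ℝ × ℝ) :
    Matrix (Fin 3) (Fin 3) ℂ :=
  Matrix.of fun i j => pdt (fun p' => F p' i j) p

/-- Entrywise spatial derivative of a matrix-valued function. -/
noncomputable def matPdx (F : ℝ × ℝ → Matrix (Fin 3) (Fin 3) ℂ) (p : ℝ × ℝ) :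
    Matrix (Fin 3) (Fin 3) ℂ :=
  Matrix.of fun i j => pdx (fun p' => F p' i j) p

lemma pdx_contDiff {f : ℝ × ℝ → ℂ} (hf : ContDiff ℝ (⊤ : ℕ∞) f) : ContDiff ℝ (⊤ : ℕ∞) (pdx f) := by
  have h : ContDiff ℝ (⊤ : ℕ∞) (fderiv ℝ f) := hf.fderiv_right (by simp)
  exact (ContinuousLinearMap.apply ℝ ℂ ((1:ℝ),(0:ℝ))).contDiff.comp h

lemma conj_hasFDerivAt {f : ℝ × ℝ → ℂ} {p : ℝ × ℝ} {f' : ℝ × ℝ →L[ℝ] ℂ}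
    (h : HasFDerivAt f f' p) :
    HasFDerivAt (fun p' => (starRingEnd ℂ) (f p'))
      ((Complex.conjCLE.toContinuousLinearMap).comp f') p :=
  Complex.conjCLE.toContinuousLinearMap.hasFDerivAt.comp p h

lemma pdt_gen {f : ℝ × ℝ → ℂ} (hf : ContDiff ℝ (⊤ : ℕ∞) f) (a b : ℂ) (p : ℝ × ℝ) :
    pdt (fun p' => a * f p' + b * (starRingEnd ℂ) (f p')) p
      = a * pdt f p + b * (starRingEnd ℂ) (pdt f p) := by
  have h1 : HasFDerivAt f (fderiv ℝ f p) p :=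
    (hf.differentiable (by simp) p).hasFDerivAt
  have hc := conj_hasFDerivAt h1
  have H := (h1.const_mul a).add (hc.const_mul b)
  unfold pdt
  erw [H.fderiv]
  simp [Complex.conjCLE]

lemma pdx_gen {f : ℝ × ℝ → ℂ} (hf : ContDiff ℝ (⊤ : ℕ∞) f) (a b c d e₁ e₂ : ℂ) (p : ℝ × ℝ) :
    pdx (fun p' => a * f p' + b * (starRingEnd ℂ) (f p') + c * pdx f p'
        + d * (starRingEnd ℂ) (pdx f p') + e₁ * (f p' * f p')
        + e₂ * ((starRingEnd ℂ) (f p') * (starRingEnd ℂ) (f p'))) p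
      = a * pdx f p + b * (starRingEnd ℂ) (pdx f p) + c * pdx (pdx f) p
        + d * (starRingEnd ℂ) (pdx (pdx f) p) + e₁ * (2 * f p * pdx f p)
        + e₂ * (2 * (starRingEnd ℂ) (f p) * (starRingEnd ℂ) (pdx f p)) := by
  have h1 : HasFDerivAt f (fderiv ℝ f p) p :=
    (hf.differentiable (by simp) p).hasFDerivAt
  have h2 : HasFDerivAt (pdx f) (fderiv ℝ (pdx f) p) p :=
    ((pdx_contDiff hf).differentiable (by simp) p).hasFDerivAt
  have hc := conj_hasFDerivAt h1
  have hcx := conj_hasFDerivAt h2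
  have H := (((((h1.const_mul a).add (hc.const_mul b)).add (h2.const_mul c)).add
      (hcx.const_mul d)).add ((h1.mul h1).const_mul e₁)).add ((hc.mul hc).const_mul e₂)
  conv_lhs => rw [pdx]
  erw [H.fderiv]
  simp [Complex.conjCLE, pdx, smul_eq_mul]
  ring

lemma sq3 : ((Real.sqrt 3 : ℝ):ℂ)^2 = 3 := by
  rw [← Complex.ofReal_pow, Real.sq_sqrt (by norm_num : (0:ℝ) ≤ 3)]; norm_num

lemma omega_val : ω = -1/2 + (Real.sqrt 3 : ℂ)/2 * Complex.I := by
  rw [ω, show (2 * Real.pi * Complex.I / 3 : ℂ) = ((2 * Real.pi / 3 : ℝ) : ℂ) * Complex.I by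
    push_cast; ring]
  rw [Complex.exp_mul_I, ← Complex.ofReal_cos, ← Complex.ofReal_sin]
  rw [show (2 * Real.pi / 3 : ℝ) = Real.pi - Real.pi/3 by ring]
  rw [Real.cos_pi_sub, Real.sin_pi_sub, Real.cos_pi_div_three, Real.sin_pi_div_three]
  push_cast
  ring

lemma omega_rel : ω^2 + ω + 1 = 0 := by
  rw [omega_val]
  linear_combination (((Real.sqrt 3:ℂ))^2/4) * Complex.I_sq + (-1/4 : ℂ) * sq3

set_option maxHeartbeats 2000000 in
lemma alg (k Q CQ Qx CQx Qxx CQxx Qt CQt : ℂ) :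
    !![0, (1 - ω ^ 2) * CQt, (1 - ω) * Qt;
       (1 - ω) * Qt, 0, (1 - ω ^ 2) * CQt;
       (1 - ω ^ 2) * CQt, (1 - ω) * Qt, 0]
    - !![0, k * ((ω ^ 2 - 1) * CQx) + ω * CQxx - 6 * ω * (Q * Qx), k * ((1 - ω ^ 2) * Qx) + ω ^ 2 * Qxx - 6 * ω ^ 2 * (CQ * CQx);
       k * ((ω - 1) * Qx) + ω ^ 2 * Qxx - 6 * ω ^ 2 * (CQ * CQx), 0, k * ((1 - ω) * CQx) + ω * CQxx - 6 * ω * (Q * Qx);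
       k * ((ω - ω ^ 2) * CQx) + ω * CQxx - 6 * ω * (Q * Qx), k * ((ω ^ 2 - ω) * Qx) + ω ^ 2 * Qxx - 6 * ω ^ 2 * (CQ * CQx), 0]
    + ((k • !![ω, 0, 0; 0, ω ^ 2, 0; 0, 0, 1] + !![0, (1 - ω ^ 2) * CQ, (1 - ω) * Q; (1 - ω) * Q, 0, (1 - ω ^ 2) * CQ; (1 - ω ^ 2) * CQ, (1 - ω) * Q, 0]) * (k ^ 2 • (!![ω, 0, 0; 0, ω ^ 2, 0; 0, 0, 1] * !![ω, 0, 0; 0, ω ^ 2, 0; 0, 0, 1]) + (k • !![0, (ω ^ 2 - 1) * CQ, (1 - ω ^ 2) * Q; (ω - 1) * Q, 0, (1 - ω) * CQ; (ω - ω ^ 2) * CQ, (ω ^ 2 - ω) * Q, 0]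
      + (CQx - 3 * Q ^ 2) • !![0, ω, 0; 0, 0, ω; ω, 0, 0]
      + (Qx - 3 * CQ ^ 2) • !![0, 0, ω ^ 2; ω ^ 2, 0, 0; 0, ω ^ 2, 0]))
        - (k ^ 2 • (!![ω, 0, 0; 0, ω ^ 2, 0; 0, 0, 1] * !![ω, 0, 0; 0, ω ^ 2, 0; 0, 0, 1]) + (k • !![0, (ω ^ 2 - 1) * CQ, (1 - ω ^ 2) * Q; (ω - 1) * Q, 0, (1 - ω) * CQ; (ω - ω ^ 2) * CQ, (ω ^ 2 - ω) * Q, 0]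
      + (CQx - 3 * Q ^ 2) • !![0, ω, 0; 0, 0, ω; ω, 0, 0]
      + (Qx - 3 * CQ ^ 2) • !![0, 0, ω ^ 2; ω ^ 2, 0, 0; 0, ω ^ 2, 0])) * (k • !![ω, 0, 0; 0, ω ^ 2, 0; 0, 0, 1] + !![0, (1 - ω ^ 2) * CQ, (1 - ω) * Q; (1 - ω) * Q, 0, (1 - ω ^ 2) * CQ; (1 - ω ^ 2) * CQ, (1 - ω) * Q, 0]))
    = !![0, (2 + ω) * CQt - ω * CQxx + 6 * ω * (Q * Qx), (1 - ω) * Qt + (1 + ω) * Qxx - 6 * (1 + ω) * (CQ * CQx);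
       (1 - ω) * Qt + (1 + ω) * Qxx - 6 * (1 + ω) * (CQ * CQx), 0, (2 + ω) * CQt - ω * CQxx + 6 * ω * (Q * Qx);
       (2 + ω) * CQt - ω * CQxx + 6 * ω * (Q * Qx), (1 - ω) * Qt + (1 + ω) * Qxx - 6 * (1 + ω) * (CQ * CQx), 0] := by
  ext i j
  fin_cases i <;> fin_cases j
  · simp [Matrix.mul_apply, Fin.sum_univ_three, Matrix.vecHead, Matrix.vecTail]
    try linear_combination (-k * Q * CQ + 2 * k * ω * Q * CQ - k * ω ^ 2 * Q * CQ) * omega_rel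
  · simp [Matrix.mul_apply, Fin.sum_univ_three, Matrix.vecHead, Matrix.vecTail]
    try linear_combination (-CQt + k * CQx - k * Q ^ 2 - k * ω * CQx + k * ω * Q ^ 2 - k ^ 2 * ω * CQ + k ^ 2 * ω ^ 2 * CQ + k ^ 2 * ω ^ 3 * CQ - k ^ 2 * ω ^ 4 * CQ) * omega_rel
  · simp [Matrix.mul_apply, Fin.sum_univ_three, Matrix.vecHead, Matrix.vecTail]
    try linear_combination (-Qxx + 6 * CQ * CQx - k * Qx + 2 * k * CQ ^ 2 + k * ω * Qx - 3 * k * ω * CQ ^ 2 + k * ω ^ 2 * CQ ^ 2) * omega_rel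
  · simp [Matrix.mul_apply, Fin.sum_univ_three, Matrix.vecHead, Matrix.vecTail]
    try linear_combination (-Qxx + 6 * CQ * CQx + k * Qx - k * CQ ^ 2 - 2 * k * ω * Qx + 3 * k * ω * CQ ^ 2 + k * ω ^ 2 * Qx - 2 * k * ω ^ 2 * CQ ^ 2 + k ^ 2 * ω * Q - 2 * k ^ 2 * ω ^ 2 * Q + k ^ 2 * ω ^ 3 * Q) * omega_rel
  · simp [Matrix.mul_apply, Fin.sum_univ_three, Matrix.vecHead, Matrix.vecTail]
    try linear_combination (-k * Q * CQ + 2 * k * ω * Q * CQ - k * ω ^ 2 * Q * CQ) * omega_rel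
  · simp [Matrix.mul_apply, Fin.sum_univ_three, Matrix.vecHead, Matrix.vecTail]
    try linear_combination (-CQt - k * CQx + 2 * k * Q ^ 2 + k * ω * CQx - 2 * k * ω * Q ^ 2 + k ^ 2 * ω * CQ - k ^ 2 * ω ^ 2 * CQ - k ^ 2 * ω ^ 3 * CQ + k ^ 2 * ω ^ 4 * CQ) * omega_rel
  · simp [Matrix.mul_apply, Fin.sum_univ_three, Matrix.vecHead, Matrix.vecTail]
    try linear_combination (-CQt - k * Q ^ 2 + k * ω * Q ^ 2 - k ^ 2 * CQ + 2 * k ^ 2 * ω * CQ - k ^ 2 * ω ^ 2 * CQ) * omega_rel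
  · simp [Matrix.mul_apply, Fin.sum_univ_three, Matrix.vecHead, Matrix.vecTail]
    try linear_combination (-Qxx + 6 * CQ * CQx - k * CQ ^ 2 + k * ω * Qx - k * ω ^ 2 * Qx + k * ω ^ 2 * CQ ^ 2 - k ^ 2 * Q + k ^ 2 * ω * Q + k ^ 2 * ω ^ 2 * Q - k ^ 2 * ω ^ 3 * Q) * omega_rel
  · simp [Matrix.mul_apply, Fin.sum_univ_three, Matrix.vecHead, Matrix.vecTail]
    try linear_combination (2 * k * Q * CQ - 4 * k * ω * Q * CQ + 2 * k * ω ^ 2 * Q * CQ) * omega_rel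


set_option maxHeartbeats 1000000 in
lemma master (q : ℝ × ℝ → ℂ) (hq : ContDiff ℝ (⊤ : ℕ∞) q) (p : ℝ × ℝ) (k : ℂ) :
    matPdt (Umat q) p - matPdx (fun p' => Vmat q k p') p
        + ((k • J + Umat q p) * (k ^ 2 • (J * J) + Vmat q k p)
            - (k ^ 2 • (J * J) + Vmat q k p) * (k • J + Umat q p))
    = !![0, (2 + ω) * (starRingEnd ℂ) (pdt q p) - ω * (starRingEnd ℂ) (pdx (pdx q) p) + 6 * ω * (q p * pdx q p), (1 - ω) * pdt q p + (1 + ω) * pdx (pdx q) p - 6 * (1 + ω) * ((starRingEnd ℂ) (q p) * (starRingEnd ℂ) (pdx q p));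
        (1 - ω) * pdt q p + (1 + ω) * pdx (pdx q) p - 6 * (1 + ω) * ((starRingEnd ℂ) (q p) * (starRingEnd ℂ) (pdx q p)), 0, (2 + ω) * (starRingEnd ℂ) (pdt q p) - ω * (starRingEnd ℂ) (pdx (pdx q) p) + 6 * ω * (q p * pdx q p);
        (2 + ω) * (starRingEnd ℂ) (pdt q p) - ω * (starRingEnd ℂ) (pdx (pdx q) p) + 6 * ω * (q p * pdx q p), (1 - ω) * pdt q p + (1 + ω) * pdx (pdx q) p - 6 * (1 + ω) * ((starRingEnd ℂ) (q p) * (starRingEnd ℂ) (pdx q p)), 0] := by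
  have eU00 : matPdt (Umat q) p 0 0 = 0 := by
    show pdt (fun p' => Umat q p' 0 0) p = _
    rw [show (fun p' => Umat q p' 0 0)
        = (fun p' => (0 : ℂ) * q p' + (0 : ℂ) * (starRingEnd ℂ) (q p')) from
      funext fun p' => by simp [Umat, Matrix.vecHead, Matrix.vecTail]; try ring]
    rw [pdt_gen hq]; ring
  have eU01 : matPdt (Umat q) p 0 1 = (1 - ω ^ 2) * (starRingEnd ℂ) (pdt q p) := by
    show pdt (fun p' => Umat q p' 0 1) p = _
    rw [show (fun p' => Umat q p' 0 1)
        = (fun p' => (0 : ℂ) * q p' + (1 - ω ^ 2 : ℂ) * (starRingEnd ℂ) (q p')) from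
      funext fun p' => by simp [Umat, Matrix.vecHead, Matrix.vecTail]; try ring]
    rw [pdt_gen hq]; ring
  have eU02 : matPdt (Umat q) p 0 2 = (1 - ω) * pdt q p := by
    show pdt (fun p' => Umat q p' 0 2) p = _
    rw [show (fun p' => Umat q p' 0 2)
        = (fun p' => (1 - ω : ℂ) * q p' + (0 : ℂ) * (starRingEnd ℂ) (q p')) from
      funext fun p' => by simp [Umat, Matrix.vecHead, Matrix.vecTail]; try ring]
    rw [pdt_gen hq]; ring
  have eU10 : matPdt (Umat q) p 1 0 = (1 - ω) * pdt q p := by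
    show pdt (fun p' => Umat q p' 1 0) p = _
    rw [show (fun p' => Umat q p' 1 0)
        = (fun p' => (1 - ω : ℂ) * q p' + (0 : ℂ) * (starRingEnd ℂ) (q p')) from
      funext fun p' => by simp [Umat, Matrix.vecHead, Matrix.vecTail]; try ring]
    rw [pdt_gen hq]; ring
  have eU11 : matPdt (Umat q) p 1 1 = 0 := by
    show pdt (fun p' => Umat q p' 1 1) p = _
    rw [show (fun p' => Umat q p' 1 1)
        = (fun p' => (0 : ℂ) * q p' + (0 : ℂ) * (starRingEnd ℂ) (q p')) from
      funext fun p' => by simp [Umat, Matrix.vecHead, Matrix.vecTail]; try ring]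
    rw [pdt_gen hq]; ring
  have eU12 : matPdt (Umat q) p 1 2 = (1 - ω ^ 2) * (starRingEnd ℂ) (pdt q p) := by
    show pdt (fun p' => Umat q p' 1 2) p = _
    rw [show (fun p' => Umat q p' 1 2)
        = (fun p' => (0 : ℂ) * q p' + (1 - ω ^ 2 : ℂ) * (starRingEnd ℂ) (q p')) from
      funext fun p' => by simp [Umat, Matrix.vecHead, Matrix.vecTail]; try ring]
    rw [pdt_gen hq]; ring
  have eU20 : matPdt (Umat q) p 2 0 = (1 - ω ^ 2) * (starRingEnd ℂ) (pdt q p) := by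
    show pdt (fun p' => Umat q p' 2 0) p = _
    rw [show (fun p' => Umat q p' 2 0)
        = (fun p' => (0 : ℂ) * q p' + (1 - ω ^ 2 : ℂ) * (starRingEnd ℂ) (q p')) from
      funext fun p' => by simp [Umat, Matrix.vecHead, Matrix.vecTail]; try ring]
    rw [pdt_gen hq]; ring
  have eU21 : matPdt (Umat q) p 2 1 = (1 - ω) * pdt q p := by
    show pdt (fun p' => Umat q p' 2 1) p = _
    rw [show (fun p' => Umat q p' 2 1)
        = (fun p' => (1 - ω : ℂ) * q p' + (0 : ℂ) * (starRingEnd ℂ) (q p')) from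
      funext fun p' => by simp [Umat, Matrix.vecHead, Matrix.vecTail]; try ring]
    rw [pdt_gen hq]; ring
  have eU22 : matPdt (Umat q) p 2 2 = 0 := by
    show pdt (fun p' => Umat q p' 2 2) p = _
    rw [show (fun p' => Umat q p' 2 2)
        = (fun p' => (0 : ℂ) * q p' + (0 : ℂ) * (starRingEnd ℂ) (q p')) from
      funext fun p' => by simp [Umat, Matrix.vecHead, Matrix.vecTail]; try ring]
    rw [pdt_gen hq]; ring
  have eV00 : matPdx (fun p' => Vmat q k p') p 0 0 = 0 := by
    show pdx (fun p' => Vmat q k p' 0 0) p = _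
    rw [show (fun p' => Vmat q k p' 0 0)
        = (fun p' => (0 : ℂ) * q p' + (0 : ℂ) * (starRingEnd ℂ) (q p')
            + (0 : ℂ) * pdx q p' + (0 : ℂ) * (starRingEnd ℂ) (pdx q p')
            + (0 : ℂ) * (q p' * q p')
            + (0 : ℂ) * ((starRingEnd ℂ) (q p') * (starRingEnd ℂ) (q p'))) from
      funext fun p' => by simp [Vmat, Matrix.vecHead, Matrix.vecTail]; try ring]
    rw [pdx_gen hq]; ring
  have eV01 : matPdx (fun p' => Vmat q k p') p 0 1 = k * ((ω ^ 2 - 1) * (starRingEnd ℂ) (pdx q p)) + ω * (starRingEnd ℂ) (pdx (pdx q) p) - 6 * ω * (q p * pdx q p) := by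
    show pdx (fun p' => Vmat q k p' 0 1) p = _
    rw [show (fun p' => Vmat q k p' 0 1)
        = (fun p' => (0 : ℂ) * q p' + (k * (ω ^ 2 - 1) : ℂ) * (starRingEnd ℂ) (q p')
            + (0 : ℂ) * pdx q p' + (ω : ℂ) * (starRingEnd ℂ) (pdx q p')
            + (-3 * ω : ℂ) * (q p' * q p')
            + (0 : ℂ) * ((starRingEnd ℂ) (q p') * (starRingEnd ℂ) (q p'))) from
      funext fun p' => by simp [Vmat, Matrix.vecHead, Matrix.vecTail]; try ring]
    rw [pdx_gen hq]; ring
  have eV02 : matPdx (fun p' => Vmat q k p') p 0 2 = k * ((1 - ω ^ 2) * pdx q p) + ω ^ 2 * pdx (pdx q) p - 6 * ω ^ 2 * ((starRingEnd ℂ) (q p) * (starRingEnd ℂ) (pdx q p)) := by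
    show pdx (fun p' => Vmat q k p' 0 2) p = _
    rw [show (fun p' => Vmat q k p' 0 2)
        = (fun p' => (k * (1 - ω ^ 2) : ℂ) * q p' + (0 : ℂ) * (starRingEnd ℂ) (q p')
            + (ω ^ 2 : ℂ) * pdx q p' + (0 : ℂ) * (starRingEnd ℂ) (pdx q p')
            + (0 : ℂ) * (q p' * q p')
            + (-3 * ω ^ 2 : ℂ) * ((starRingEnd ℂ) (q p') * (starRingEnd ℂ) (q p'))) from
      funext fun p' => by simp [Vmat, Matrix.vecHead, Matrix.vecTail]; try ring]
    rw [pdx_gen hq]; ring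
  have eV10 : matPdx (fun p' => Vmat q k p') p 1 0 = k * ((ω - 1) * pdx q p) + ω ^ 2 * pdx (pdx q) p - 6 * ω ^ 2 * ((starRingEnd ℂ) (q p) * (starRingEnd ℂ) (pdx q p)) := by
    show pdx (fun p' => Vmat q k p' 1 0) p = _
    rw [show (fun p' => Vmat q k p' 1 0)
        = (fun p' => (k * (ω - 1) : ℂ) * q p' + (0 : ℂ) * (starRingEnd ℂ) (q p')
            + (ω ^ 2 : ℂ) * pdx q p' + (0 : ℂ) * (starRingEnd ℂ) (pdx q p')
            + (0 : ℂ) * (q p' * q p')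
            + (-3 * ω ^ 2 : ℂ) * ((starRingEnd ℂ) (q p') * (starRingEnd ℂ) (q p'))) from
      funext fun p' => by simp [Vmat, Matrix.vecHead, Matrix.vecTail]; try ring]
    rw [pdx_gen hq]; ring
  have eV11 : matPdx (fun p' => Vmat q k p') p 1 1 = 0 := by
    show pdx (fun p' => Vmat q k p' 1 1) p = _
    rw [show (fun p' => Vmat q k p' 1 1)
        = (fun p' => (0 : ℂ) * q p' + (0 : ℂ) * (starRingEnd ℂ) (q p')
            + (0 : ℂ) * pdx q p' + (0 : ℂ) * (starRingEnd ℂ) (pdx q p')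
            + (0 : ℂ) * (q p' * q p')
            + (0 : ℂ) * ((starRingEnd ℂ) (q p') * (starRingEnd ℂ) (q p'))) from
      funext fun p' => by simp [Vmat, Matrix.vecHead, Matrix.vecTail]; try ring]
    rw [pdx_gen hq]; ring
  have eV12 : matPdx (fun p' => Vmat q k p') p 1 2 = k * ((1 - ω) * (starRingEnd ℂ) (pdx q p)) + ω * (starRingEnd ℂ) (pdx (pdx q) p) - 6 * ω * (q p * pdx q p) := by
    show pdx (fun p' => Vmat q k p' 1 2) p = _
    rw [show (fun p' => Vmat q k p' 1 2)
        = (fun p' => (0 : ℂ) * q p' + (k * (1 - ω) : ℂ) * (starRingEnd ℂ) (q p')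
            + (0 : ℂ) * pdx q p' + (ω : ℂ) * (starRingEnd ℂ) (pdx q p')
            + (-3 * ω : ℂ) * (q p' * q p')
            + (0 : ℂ) * ((starRingEnd ℂ) (q p') * (starRingEnd ℂ) (q p'))) from
      funext fun p' => by simp [Vmat, Matrix.vecHead, Matrix.vecTail]; try ring]
    rw [pdx_gen hq]; ring
  have eV20 : matPdx (fun p' => Vmat q k p') p 2 0 = k * ((ω - ω ^ 2) * (starRingEnd ℂ) (pdx q p)) + ω * (starRingEnd ℂ) (pdx (pdx q) p) - 6 * ω * (q p * pdx q p) := by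
    show pdx (fun p' => Vmat q k p' 2 0) p = _
    rw [show (fun p' => Vmat q k p' 2 0)
        = (fun p' => (0 : ℂ) * q p' + (k * (ω - ω ^ 2) : ℂ) * (starRingEnd ℂ) (q p')
            + (0 : ℂ) * pdx q p' + (ω : ℂ) * (starRingEnd ℂ) (pdx q p')
            + (-3 * ω : ℂ) * (q p' * q p')
            + (0 : ℂ) * ((starRingEnd ℂ) (q p') * (starRingEnd ℂ) (q p'))) from
      funext fun p' => by simp [Vmat, Matrix.vecHead, Matrix.vecTail]; try ring]
    rw [pdx_gen hq]; ring
  have eV21 : matPdx (fun p' => Vmat q k p') p 2 1 = k * ((ω ^ 2 - ω) * pdx q p) + ω ^ 2 * pdx (pdx q) p - 6 * ω ^ 2 * ((starRingEnd ℂ) (q p) * (starRingEnd ℂ) (pdx q p)) := by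
    show pdx (fun p' => Vmat q k p' 2 1) p = _
    rw [show (fun p' => Vmat q k p' 2 1)
        = (fun p' => (k * (ω ^ 2 - ω) : ℂ) * q p' + (0 : ℂ) * (starRingEnd ℂ) (q p')
            + (ω ^ 2 : ℂ) * pdx q p' + (0 : ℂ) * (starRingEnd ℂ) (pdx q p')
            + (0 : ℂ) * (q p' * q p')
            + (-3 * ω ^ 2 : ℂ) * ((starRingEnd ℂ) (q p') * (starRingEnd ℂ) (q p'))) from
      funext fun p' => by simp [Vmat, Matrix.vecHead, Matrix.vecTail]; try ring]
    rw [pdx_gen hq]; ring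
  have eV22 : matPdx (fun p' => Vmat q k p') p 2 2 = 0 := by
    show pdx (fun p' => Vmat q k p' 2 2) p = _
    rw [show (fun p' => Vmat q k p' 2 2)
        = (fun p' => (0 : ℂ) * q p' + (0 : ℂ) * (starRingEnd ℂ) (q p')
            + (0 : ℂ) * pdx q p' + (0 : ℂ) * (starRingEnd ℂ) (pdx q p')
            + (0 : ℂ) * (q p' * q p')
            + (0 : ℂ) * ((starRingEnd ℂ) (q p') * (starRingEnd ℂ) (q p'))) from
      funext fun p' => by simp [Vmat, Matrix.vecHead, Matrix.vecTail]; try ring]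
    rw [pdx_gen hq]; ring
  have hU : matPdt (Umat q) p = !![0, (1 - ω ^ 2) * (starRingEnd ℂ) (pdt q p), (1 - ω) * pdt q p;
        (1 - ω) * pdt q p, 0, (1 - ω ^ 2) * (starRingEnd ℂ) (pdt q p);
        (1 - ω ^ 2) * (starRingEnd ℂ) (pdt q p), (1 - ω) * pdt q p, 0] := by
    rw [Matrix.eta_fin_three (matPdt (Umat q) p), eU00, eU01, eU02, eU10, eU11, eU12, eU20, eU21, eU22]
  have hV : matPdx (fun p' => Vmat q k p') p = !![0, k * ((ω ^ 2 - 1) * (starRingEnd ℂ) (pdx q p)) + ω * (starRingEnd ℂ) (pdx (pdx q) p) - 6 * ω * (q p * pdx q p), k * ((1 - ω ^ 2) * pdx q p) + ω ^ 2 * pdx (pdx q) p - 6 * ω ^ 2 * ((starRingEnd ℂ) (q p) * (starRingEnd ℂ) (pdx q p));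
        k * ((ω - 1) * pdx q p) + ω ^ 2 * pdx (pdx q) p - 6 * ω ^ 2 * ((starRingEnd ℂ) (q p) * (starRingEnd ℂ) (pdx q p)), 0, k * ((1 - ω) * (starRingEnd ℂ) (pdx q p)) + ω * (starRingEnd ℂ) (pdx (pdx q) p) - 6 * ω * (q p * pdx q p);
        k * ((ω - ω ^ 2) * (starRingEnd ℂ) (pdx q p)) + ω * (starRingEnd ℂ) (pdx (pdx q) p) - 6 * ω * (q p * pdx q p), k * ((ω ^ 2 - ω) * pdx q p) + ω ^ 2 * pdx (pdx q) p - 6 * ω ^ 2 * ((starRingEnd ℂ) (q p) * (starRingEnd ℂ) (pdx q p)), 0] := by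
    rw [Matrix.eta_fin_three (matPdx (fun p' => Vmat q k p') p), eV00, eV01, eV02, eV10, eV11, eV12, eV20, eV21, eV22]
  have hJ : J = !![ω, 0, 0; 0, ω ^ 2, 0; 0, 0, 1] := by
    ext i j
    fin_cases i <;> fin_cases j <;> simp [J, Matrix.diagonal, Matrix.vecHead, Matrix.vecTail]
  rw [hU, hV, hJ]
  simp only [Umat, Vmat]
  exact alg k (q p) ((starRingEnd ℂ) (q p)) (pdx q p) ((starRingEnd ℂ) (pdx q p)) (pdx (pdx q) p) ((starRingEnd ℂ) (pdx (pdx q) p)) (pdt q p) ((starRingEnd ℂ) (pdt q p))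


/-- `q` satisfies `i q_t - (1/√3) q_xx + 2√3 q̄ q̄_x = 0` on ℝ² if and only if the
zero-curvature equation `∂_t 𝒰 - ∂_x 𝒱 + [kJ + 𝒰, k²J² + 𝒱] = 0` holds for all
`(x,t) ∈ ℝ²` and all `k ∈ ℂ`. -/
theorem zero_curvature_E1 (q : ℝ × ℝ → ℂ) (hq : ContDiff ℝ (⊤ : ℕ∞) q) :
    (∀ p : ℝ × ℝ,
      Complex.I * pdt q p - (1 / (Real.sqrt 3 : ℂ)) * pdx (pdx q) p
        + 2 * (Real.sqrt 3 : ℂ) * (starRingEnd ℂ) (q p) * (starRingEnd ℂ) (pdx q p) = 0)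
    ↔
    (∀ p : ℝ × ℝ, ∀ k : ℂ,
      matPdt (Umat q) p - matPdx (fun p' => Vmat q k p') p
        + ((k • J + Umat q p) * (k ^ 2 • (J * J) + Vmat q k p)
            - (k ^ 2 • (J * J) + Vmat q k p) * (k • J + Umat q p)) = 0) := by
  have h13 : (1:ℂ)/(Real.sqrt 3:ℂ) = (Real.sqrt 3:ℂ)/3 := by
    have hne : ((Real.sqrt 3:ℝ):ℂ) ≠ 0 := by
      simpa using Real.sqrt_ne_zero'.mpr (by norm_num : (0:ℝ) < 3)
    field_simp
    linear_combination (-1 : ℂ) * sq3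
  constructor
  · intro h p k
    rw [master q hq p k]
    have hE := h p
    rw [h13] at hE
    have hEc : -Complex.I * (starRingEnd ℂ) (pdt q p) - (Real.sqrt 3 : ℂ)/3 * (starRingEnd ℂ) (pdx (pdx q) p) + 2 * (Real.sqrt 3 : ℂ) * (q p) * (pdx q p) = 0 := by
      have h2 := congrArg (starRingEnd ℂ) hE
      simp only [map_add, map_sub, map_mul, map_div₀, map_ofNat, Complex.conj_I,
        Complex.conj_ofReal, map_zero, Complex.conj_conj, map_one] at h2
      linear_combination h2
    have he1 : (1 - ω) * pdt q p + (1 + ω) * pdx (pdx q) p - 6 * (1 + ω) * ((starRingEnd ℂ) (q p) * (starRingEnd ℂ) (pdx q p)) = 0 := by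
      rw [omega_val]
      linear_combination ((-3/2) * Complex.I + (-1/2) * (Real.sqrt 3 : ℂ)) * hE
        + ((3/2) * (pdt q p)) * Complex.I_sq
        + ((-1/6) * (pdx (pdx q) p) + ((starRingEnd ℂ) (q p)) * ((starRingEnd ℂ) (pdx q p))) * sq3
    have he2 : (2 + ω) * (starRingEnd ℂ) (pdt q p) - ω * (starRingEnd ℂ) (pdx (pdx q) p) + 6 * ω * (q p * pdx q p) = 0 := by
      rw [omega_val]
      linear_combination ((3/2) * Complex.I + (-1/2) * (Real.sqrt 3 : ℂ)) * hEc
        + ((3/2) * ((starRingEnd ℂ) (pdt q p))) * Complex.I_sq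
        + ((-1/6) * ((starRingEnd ℂ) (pdx (pdx q) p)) + (q p) * (pdx q p)) * sq3
    rw [he1, he2]
    ext i j
    fin_cases i <;> fin_cases j <;> rfl
  · intro h p
    have hm := h p 0
    rw [master q hq p 0] at hm
    have he1 : (1 - ω) * pdt q p + (1 + ω) * pdx (pdx q) p - 6 * (1 + ω) * ((starRingEnd ℂ) (q p) * (starRingEnd ℂ) (pdx q p)) = 0 := by
      have h2 := congrFun (congrFun hm 0) 2
      simp [Matrix.vecHead, Matrix.vecTail] at h2
      linear_combination h2
    rw [omega_val] at he1
    rw [h13]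
    linear_combination ((1/2) * Complex.I + (-1/6) * (Real.sqrt 3 : ℂ)) * he1
      + ((1/4) * (Real.sqrt 3 : ℂ) * (pdt q p) + (-1/4) * (Real.sqrt 3 : ℂ) * (pdx (pdx q) p) + (3/2) * (Real.sqrt 3 : ℂ) * ((starRingEnd ℂ) (q p)) * ((starRingEnd ℂ) (pdx q p))) * Complex.I_sq
      + ((-1/12) * Complex.I * (pdt q p) + (1/12) * Complex.I * (pdx (pdx q) p)
          + (-1/2) * Complex.I * ((starRingEnd ℂ) (q p)) * ((starRingEnd ℂ) (pdx q p))) * sq3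
end

section
/- Let ω = e^{2πi/3}, 𝒜 = [[0,0,1],[1,0,0],[0,1,0]], and ℬ = [[0,1,0],[1,0,0],[0,0,1]]. Let M be a 3×3 complex matrix satisfying M = ω²·𝒜M𝒜⁻¹, M = ℬ\overline{M}ℬ (where \overline{M} is the entrywise complex conjugate), and M₁₂ = M₁₃ = 0. Then M₃₃ is real and M = M₃₃·diag(ω², ω, 1). -/
/-- 𝒜 = [[0,0,1],[1,0,0],[0,1,0]]. -/
def Acal : Matrix (Fin 3) (Fin 3) ℂ := !![0, 0, 1; 1, 0, 0; 0, 1, 0]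

/-- ℬ = [[0,1,0],[1,0,0],[0,0,1]]. -/
def Bcal : Matrix (Fin 3) (Fin 3) ℂ := !![0, 1, 0; 1, 0, 0; 0, 0, 1]

lemma omega_cube : ω ^ 3 = 1 := by
  rw [ω, ← Complex.exp_nat_mul]
  rw [show (3:ℕ) * (2 * (Real.pi:ℂ) * Complex.I / 3) = 2 * Real.pi * Complex.I by
    push_cast; ring]
  exact Complex.exp_two_pi_mul_I

lemma Acal_inv : Acal⁻¹ = !![(0:ℂ),1,0;0,0,1;1,0,0] := by
  apply Matrix.inv_eq_right_inv
  norm_num [Acal, Matrix.mul_fin_three]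
  exact Matrix.one_fin_three.symm

/-- If a 3×3 complex matrix `M` satisfies `M = ω² 𝒜M𝒜⁻¹`, `M = ℬ M̄ ℬ`
and `M₁₂ = M₁₃ = 0`, then `M₃₃` is real and `M = M₃₃ diag(ω², ω, 1)`. -/
theorem structure_M1 (M : Matrix (Fin 3) (Fin 3) ℂ)
    (hA : M = ω ^ 2 • (Acal * M * Acal⁻¹))
    (hB : M = Bcal * M.map (starRingEnd ℂ) * Bcal)
    (h12 : M 0 1 = 0) (h13 : M 0 2 = 0) :
    (M 2 2).im = 0 ∧ M = M 2 2 • Matrix.diagonal ![ω ^ 2, ω, 1] := by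
  rw [Acal_inv] at hA
  have e10 : M 1 0 = 0 := by
    conv_lhs => rw [hA]
    simp [Acal, Matrix.mul_apply, Matrix.vecMul, dotProduct, Matrix.vecHead, Matrix.vecTail, Fin.sum_univ_three, h13]
  have e12 : M 1 2 = 0 := by
    conv_lhs => rw [hA]
    simp [Acal, Matrix.mul_apply, Matrix.vecMul, dotProduct, Matrix.vecHead, Matrix.vecTail, Fin.sum_univ_three, h12]
  have e20 : M 2 0 = 0 := by
    conv_lhs => rw [hA]
    simp [Acal, Matrix.mul_apply, Matrix.vecMul, dotProduct, Matrix.vecHead, Matrix.vecTail, Fin.sum_univ_three, e12]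
  have e21 : M 2 1 = 0 := by
    conv_lhs => rw [hA]
    simp [Acal, Matrix.mul_apply, Matrix.vecMul, dotProduct, Matrix.vecHead, Matrix.vecTail, Fin.sum_univ_three, e10]
  have e00 : M 0 0 = ω ^ 2 * M 2 2 := by
    conv_lhs => rw [hA]
    simp [Acal, Matrix.mul_apply, Matrix.vecMul, dotProduct, Matrix.vecHead, Matrix.vecTail, Fin.sum_univ_three]
  have e11 : M 1 1 = ω ^ 2 * M 0 0 := by
    conv_lhs => rw [hA]
    simp [Acal, Matrix.mul_apply, Matrix.vecMul, dotProduct, Matrix.vecHead, Matrix.vecTail, Fin.sum_univ_three]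
  have hreal : M 2 2 = starRingEnd ℂ (M 2 2) := by
    conv_lhs => rw [hB]
    simp [Bcal, Matrix.mul_apply, Matrix.vecMul, dotProduct, Fin.sum_univ_three]
  have him : (M 2 2).im = 0 := by
    have := congrArg Complex.im hreal
    simp [Complex.conj_im] at this
    linarith
  refine ⟨him, ?_⟩
  have h11 : M 1 1 = ω * M 2 2 := by
    rw [e11, e00, ← mul_assoc, show ω ^ 2 * ω ^ 2 = ω * ω ^ 3 by ring, omega_cube]
    ring
  ext i j
  fin_cases i <;> fin_cases j <;>
    simp [Matrix.diagonal, e00, h11, e10, e12, e20, e21, h12, h13] <;> ring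
end

section
/- Let ω = e^{2πi/3} and let y₁, y₂, y₃ ∈ ℝ. Define the 3×3 complex matrices B = y₁·[[ω, ω², 1],[ω, ω², 1],[ω, ω², 1]] and A = y₂·[[ω², ω, 1],[ω², ω, 1],[ω², ω, 1]] + y₃·[[ω², 1, ω],[1, ω, ω²],[ω, ω², 1]], and for k ∈ ℂ \ {0} set T(k) = I + A/k + B/k². Then det T(k) = 1 for all k ≠ 0, and T satisfies the symmetries T(k) = 𝒜 T(ωk) 𝒜⁻¹ and T(k) = ℬ \overline{T(\overline{k})} ℬ for all k ≠ 0, where 𝒜 = [[0,0,1],[1,0,0],[0,1,0]], ℬ = [[0,1,0],[1,0,0],[0,0,1]], and \overline{·} applied to a matrix denotes entrywise complex conjugation. -/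
/-!
Write `T(k) = 1 + N(k)` with `N(k) = A/k + B/k²`. The three matrices spanning the possible `A`
and `B` are rank one, and every product of three of them vanishes (the only nonzero product of
two is `A₂ A₃`), so `N(k)³ = 0` and hence `det T(k) = 1`. Both symmetries hold coefficientwise:
conjugation by `𝒜` multiplies `A` by `ω` and `B` by `ω²`, which the substitution `k ↦ ωk`
undoes, while `X ↦ ℬ X̄ ℬ` fixes `A` and `B` because the `yᵢ` are real.
-/

open Matrix in
theorem Matrix.det_one_add_of_isNilpotent {R n : Type*} [CommRing R] [IsReduced R] [Fintype n]
    [DecidableEq n] {N : Matrix n n R} (hN : IsNilpotent N) : (1 + N).det = 1 := by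
  have hcharpoly : (-N).charpoly = Polynomial.X ^ Fintype.card n := by
    ext i
    rw [← sub_eq_zero, ← Polynomial.coeff_sub]
    exact (Polynomial.isNilpotent_iff.1
      (isNilpotent_charpoly_sub_pow_of_isNilpotent hN.neg) i).eq_zero
  simpa [eval_charpoly] using congrArg (Polynomial.eval 1) hcharpoly

open Pointwise in
theorem Submodule.pow_three_eq_zero_of_mem_span {R A : Type*} [CommSemiring R] [Semiring A]
    [Algebra R A] {s : Set A} (hs : ∀ x ∈ s, ∀ y ∈ s, ∀ z ∈ s, x * y * z = 0) {a : A}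
    (ha : a ∈ span R s) : a ^ 3 = 0 := by
  have h : a ^ 3 ∈ span R (s * s * s) := by
    rw [← span_mul_span, ← span_mul_span, pow_three']
    exact mul_mem_mul (mul_mem_mul ha ha) ha
  rwa [span_eq_bot.2, mem_bot] at h
  rintro _ ⟨_, ⟨x, hx, y, hy, rfl⟩, z, hz, rfl⟩
  exact hs x hx y hy z hz

section LaurentFactor

variable {n K : Type*} [DecidableEq n] [Field K]

def laurentFactor (A B : Matrix n n K) (k : K) : Matrix n n K :=
  1 + k⁻¹ • A + (k ^ 2)⁻¹ • B

variable {A B : Matrix n n K}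

theorem map_laurentFactor (σ : K →+* K) (k : K) :
    (laurentFactor A B k).map σ = laurentFactor (A.map σ) (B.map σ) (σ k) := by
  simp [laurentFactor, Matrix.map_add, Matrix.map_smul']

variable [Fintype n]

theorem det_laurentFactor_eq_one {s : Set (Matrix n n K)}
    (hs : ∀ x ∈ s, ∀ y ∈ s, ∀ z ∈ s, x * y * z = 0)
    (hA : A ∈ Submodule.span K s) (hB : B ∈ Submodule.span K s) (k : K) :
    (laurentFactor A B k).det = 1 := by
  have hN : k⁻¹ • A + (k ^ 2)⁻¹ • B ∈ Submodule.span K s :=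
    add_mem (Submodule.smul_mem _ _ hA) (Submodule.smul_mem _ _ hB)
  rw [laurentFactor, add_assoc]
  exact Matrix.det_one_add_of_isNilpotent ⟨3, Submodule.pow_three_eq_zero_of_mem_span hs hN⟩

theorem mul_laurentFactor_mul_inv {P : Matrix n n K} {c : K} (hP : IsUnit P.det) (hc : c ≠ 0)
    (hA : P * A = c • (A * P)) (hB : P * B = c ^ 2 • (B * P)) (k : K) :
    P * laurentFactor A B (c * k) * P⁻¹ = laurentFactor A B k := by
  have hA' : P * A * P⁻¹ = c • A := by
    rw [hA, smul_mul_assoc, Matrix.mul_nonsing_inv_cancel_right _ _ hP]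
  have hB' : P * B * P⁻¹ = c ^ 2 • B := by
    rw [hB, smul_mul_assoc, Matrix.mul_nonsing_inv_cancel_right _ _ hP]
  simp only [laurentFactor, mul_add, add_mul, mul_one, mul_smul_comm, smul_mul_assoc, hA', hB',
    Matrix.mul_nonsing_inv _ hP, smul_smul]
  congr 3 <;> field_simp

theorem mul_map_laurentFactor_mul {P : Matrix n n K} (σ : K →+* K) (hP : P * P = 1)
    (hA : P * A.map σ * P = A) (hB : P * B.map σ * P = B) (k : K) :
    P * (laurentFactor A B k).map σ * P = laurentFactor A B (σ k) := by
  rw [map_laurentFactor]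
  simp only [laurentFactor, mul_add, add_mul, mul_one, mul_smul_comm, smul_mul_assoc, hP, hA, hB]

end LaurentFactor

theorem isPrimitiveRoot_ω : IsPrimitiveRoot ω 3 := by
  simpa [ω, mul_div_assoc] using Complex.isPrimitiveRoot_exp 3 (by norm_num)

theorem ω_sq_add_ω_add_one : ω ^ 2 + ω + 1 = 0 := by
  linear_combination (by simpa [Finset.sum_range_succ] using
    isPrimitiveRoot_ω.geom_sum_eq_zero (by norm_num) : 1 + ω + ω ^ 2 = 0)

theorem starRingEnd_ω : starRingEnd ℂ ω = ω ^ 2 := by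
  rw [← Complex.inv_eq_conj (isPrimitiveRoot_ω.norm'_eq_one (by norm_num))]
  exact inv_eq_of_mul_eq_one_right (by rw [← pow_succ', isPrimitiveRoot_ω.pow_eq_one])

theorem Matrix.map_starRingEnd_ofReal_smul {m n : Type*} (r : ℝ) (X : Matrix m n ℂ) :
    ((r : ℂ) • X).map (starRingEnd ℂ) = (r : ℂ) • X.map (starRingEnd ℂ) := by
  ext
  simp

theorem isUnit_det_Acal : IsUnit Acal.det := by
  simp [Acal, Matrix.det_fin_three]

theorem Bcal_mul_Bcal : Bcal * Bcal = 1 := by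
  rw [Bcal, Matrix.one_fin_three]
  simp

namespace TFactor

noncomputable def B₁ : Matrix (Fin 3) (Fin 3) ℂ := !![ω, ω ^ 2, 1; ω, ω ^ 2, 1; ω, ω ^ 2, 1]

noncomputable def A₂ : Matrix (Fin 3) (Fin 3) ℂ := !![ω ^ 2, ω, 1; ω ^ 2, ω, 1; ω ^ 2, ω, 1]

noncomputable def A₃ : Matrix (Fin 3) (Fin 3) ℂ := !![ω ^ 2, 1, ω; 1, ω, ω ^ 2; ω, ω ^ 2, 1]

def generators : Set (Matrix (Fin 3) (Fin 3) ℂ) := {B₁, A₂, A₃}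

theorem mul_B₁_eq_zero : ∀ x ∈ generators, x * B₁ = 0 := by
  simp only [generators, Set.mem_insert_iff, Set.mem_singleton_iff, forall_eq_or_imp,
    forall_eq]
  refine ⟨?_, ?_, ?_⟩ <;> ext i j <;> fin_cases i <;> fin_cases j <;>
    simp [B₁, A₂, A₃, Matrix.mul_apply, Fin.sum_univ_three] <;> grind [ω_sq_add_ω_add_one]

theorem mul_A₂_eq_zero : ∀ x ∈ generators, x * A₂ = 0 := by
  simp only [generators, Set.mem_insert_iff, Set.mem_singleton_iff, forall_eq_or_imp,
    forall_eq]
  refine ⟨?_, ?_, ?_⟩ <;> ext i j <;> fin_cases i <;> fin_cases j <;>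
    simp [B₁, A₂, A₃, Matrix.mul_apply, Fin.sum_univ_three] <;> grind [ω_sq_add_ω_add_one]

theorem A₃_mul_eq_zero : ∀ x ∈ generators, A₃ * x = 0 := by
  simp only [generators, Set.mem_insert_iff, Set.mem_singleton_iff, forall_eq_or_imp,
    forall_eq]
  refine ⟨?_, ?_, ?_⟩ <;> ext i j <;> fin_cases i <;> fin_cases j <;>
    simp [B₁, A₂, A₃, Matrix.mul_apply, Fin.sum_univ_three] <;> grind [ω_sq_add_ω_add_one]

theorem mul_mul_eq_zero :
    ∀ x ∈ generators, ∀ y ∈ generators, ∀ z ∈ generators, x * y * z = 0 := by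
  intro x hx y hy z hz
  rcases hy with rfl | rfl | rfl
  · rw [mul_B₁_eq_zero x hx, zero_mul]
  · rw [mul_A₂_eq_zero x hx, zero_mul]
  · rw [mul_assoc, A₃_mul_eq_zero z hz, mul_zero]

theorem Acal_mul_B₁ : Acal * B₁ = ω ^ 2 • (B₁ * Acal) := by
  ext i j; fin_cases i <;> fin_cases j <;>
    simp [Acal, B₁, Matrix.mul_apply, Fin.sum_univ_three] <;> grind [ω_sq_add_ω_add_one]

theorem Acal_mul_A₂ : Acal * A₂ = ω • (A₂ * Acal) := by
  ext i j; fin_cases i <;> fin_cases j <;>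
    simp [Acal, A₂, Matrix.mul_apply, Fin.sum_univ_three] <;> grind [ω_sq_add_ω_add_one]

theorem Acal_mul_A₃ : Acal * A₃ = ω • (A₃ * Acal) := by
  ext i j; fin_cases i <;> fin_cases j <;>
    simp [Acal, A₃, Matrix.mul_apply, Fin.sum_univ_three] <;> grind [ω_sq_add_ω_add_one]

theorem Bcal_mul_map_starRingEnd_mul :
    ∀ x ∈ generators, Bcal * x.map (starRingEnd ℂ) * Bcal = x := by
  simp only [generators, Set.mem_insert_iff, Set.mem_singleton_iff, forall_eq_or_imp,
    forall_eq]
  refine ⟨?_, ?_, ?_⟩ <;> ext i j <;>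
    simp only [Matrix.mul_apply, Fin.sum_univ_three, Matrix.map_apply] <;>
    fin_cases i <;> fin_cases j <;>
    simp [Bcal, B₁, A₂, A₃, starRingEnd_ω] <;> grind [ω_sq_add_ω_add_one]

noncomputable def coeffA (y₂ y₃ : ℝ) : Matrix (Fin 3) (Fin 3) ℂ :=
  (y₂ : ℂ) • A₂ + (y₃ : ℂ) • A₃

noncomputable def coeffB (y₁ : ℝ) : Matrix (Fin 3) (Fin 3) ℂ := (y₁ : ℂ) • B₁

theorem coeffA_mem_span (y₂ y₃ : ℝ) : coeffA y₂ y₃ ∈ Submodule.span ℂ generators :=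
  add_mem (Submodule.smul_mem _ _ (Submodule.subset_span (by simp [generators])))
    (Submodule.smul_mem _ _ (Submodule.subset_span (by simp [generators])))

theorem coeffB_mem_span (y₁ : ℝ) : coeffB y₁ ∈ Submodule.span ℂ generators :=
  Submodule.smul_mem _ _ (Submodule.subset_span (by simp [generators]))

theorem Acal_mul_coeffA (y₂ y₃ : ℝ) : Acal * coeffA y₂ y₃ = ω • (coeffA y₂ y₃ * Acal) := by
  simp only [coeffA, mul_add, add_mul, mul_smul_comm, smul_mul_assoc, Acal_mul_A₂, Acal_mul_A₃,
    smul_add, smul_comm ω]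

theorem Acal_mul_coeffB (y₁ : ℝ) : Acal * coeffB y₁ = ω ^ 2 • (coeffB y₁ * Acal) := by
  simp only [coeffB, mul_smul_comm, smul_mul_assoc, Acal_mul_B₁, smul_comm (ω ^ 2)]

theorem Bcal_mul_map_coeffA_mul (y₂ y₃ : ℝ) :
    Bcal * (coeffA y₂ y₃).map (starRingEnd ℂ) * Bcal = coeffA y₂ y₃ := by
  simp only [coeffA, Matrix.map_add _ (map_add _), Matrix.map_starRingEnd_ofReal_smul, mul_add,
    add_mul, mul_smul_comm, smul_mul_assoc,
    Bcal_mul_map_starRingEnd_mul A₂ (by simp [generators]),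
    Bcal_mul_map_starRingEnd_mul A₃ (by simp [generators])]

theorem Bcal_mul_map_coeffB_mul (y₁ : ℝ) :
    Bcal * (coeffB y₁).map (starRingEnd ℂ) * Bcal = coeffB y₁ := by
  simp only [coeffB, Matrix.map_starRingEnd_ofReal_smul, mul_smul_comm, smul_mul_assoc,
    Bcal_mul_map_starRingEnd_mul B₁ (by simp [generators])]

end TFactor

open TFactor in
/-- The factor `T(k) = I + A/k + B/k²` built from real parameters `y₁, y₂, y₃`
has unit determinant and obeys the symmetries `T(k) = 𝒜 T(ωk) 𝒜⁻¹` and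
`T(k) = ℬ conj(T(k̄)) ℬ` for all `k ≠ 0`. -/
theorem T_factor_properties (y₁ y₂ y₃ : ℝ)
    (B A : Matrix (Fin 3) (Fin 3) ℂ)
    (hB : B = (y₁ : ℂ) • !![ω, ω ^ 2, 1; ω, ω ^ 2, 1; ω, ω ^ 2, 1])
    (hA : A = (y₂ : ℂ) • !![ω ^ 2, ω, 1; ω ^ 2, ω, 1; ω ^ 2, ω, 1]
        + (y₃ : ℂ) • !![ω ^ 2, 1, ω; 1, ω, ω ^ 2; ω, ω ^ 2, 1])
    (T : ℂ → Matrix (Fin 3) (Fin 3) ℂ)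
    (hT : T = fun k => 1 + k⁻¹ • A + (k ^ 2)⁻¹ • B) :
    ∀ k : ℂ, k ≠ 0 →
      (T k).det = 1 ∧
      T k = Acal * T (ω * k) * Acal⁻¹ ∧
      T k = Bcal * (T ((starRingEnd ℂ) k)).map (starRingEnd ℂ) * Bcal := by
  intro k _
  obtain rfl : T = laurentFactor A B := hT
  obtain rfl : A = coeffA y₂ y₃ := hA
  obtain rfl : B = coeffB y₁ := hB
  refine ⟨det_laurentFactor_eq_one mul_mul_eq_zero (coeffA_mem_span y₂ y₃)
      (coeffB_mem_span y₁) k,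
    (mul_laurentFactor_mul_inv isUnit_det_Acal (isPrimitiveRoot_ω.ne_zero (by norm_num))
      (Acal_mul_coeffA y₂ y₃) (Acal_mul_coeffB y₁) k).symm, ?_⟩
  rw [mul_map_laurentFactor_mul _ Bcal_mul_Bcal (Bcal_mul_map_coeffA_mul y₂ y₃)
    (Bcal_mul_map_coeffB_mul y₁), Complex.conj_conj]
end

section
/- Let ω = e^{2πi/3}, and let k₀ ∈ ℝ with k₀ ≠ 0 and φ ∈ ℝ. Define q : ℝ² → ℂ by q(x,t) = −(1/2) · √3 k₀ ω² e^{(i/2)(√3 k₀ (x − k₀ t) + φ + π/6)} / sin( (3/2)(√3 k₀ (x − k₀ t) + φ + π/6) ). Then q is smooth and satisfies i q_t − (1/√3) q_xx + 2√3 \overline{q} \overline{q}_x = 0 on the open set of all (x,t) ∈ ℝ² for which (3/2)(√3 k₀ (x − k₀ t) + φ + π/6) is not an integer multiple of π. -/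
lemma omega_conj_mul : (starRingEnd ℂ) ω * ω = 1 := by
  rw [ω, ← Complex.exp_conj, ← Complex.exp_add]
  rw [show (starRingEnd ℂ) (2 * Real.pi * Complex.I / 3) + 2 * Real.pi * Complex.I / 3 = 0 by
    simp [map_div₀, Complex.conj_I, Complex.conj_ofReal, map_ofNat]; ring]
  exact Complex.exp_zero

/-- the constant prefactor -/
noncomputable def cc (k₀ : ℝ) : ℂ := -(1 / 2) * ((Real.sqrt 3 * k₀ : ℝ) : ℂ) * ω ^ 2

noncomputable def gg (c : ℂ) (u : ℝ) : ℂ :=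
  c * Complex.exp (Complex.I / 2 * (u:ℂ)) / ((Real.sin ((3/2)*u) :ℝ):ℂ)

noncomputable def gg1 (c : ℂ) (u : ℝ) : ℂ :=
  c * Complex.exp (Complex.I / 2 * (u:ℂ)) *
    (Complex.I * ((Real.sin ((3/2)*u) :ℝ):ℂ) - 3 * ((Real.cos ((3/2)*u) :ℝ):ℂ))
    / (2 * ((Real.sin ((3/2)*u) :ℝ):ℂ)^2)

noncomputable def gg2 (c : ℂ) (u : ℝ) : ℂ :=
  c * Complex.exp (Complex.I / 2 * (u:ℂ)) *
    (4 * ((Real.sin ((3/2)*u) :ℝ):ℂ)^2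
      - 3 * Complex.I * ((Real.cos ((3/2)*u) :ℝ):ℂ) * ((Real.sin ((3/2)*u) :ℝ):ℂ)
      + 9 * ((Real.cos ((3/2)*u) :ℝ):ℂ)^2)
    / (2 * ((Real.sin ((3/2)*u) :ℝ):ℂ)^3)

lemma hexp (u : ℝ) : HasDerivAt (fun y : ℝ => Complex.exp (Complex.I / 2 * (y:ℂ)))
    (Complex.exp (Complex.I / 2 * (u:ℂ)) * (Complex.I / 2)) u := by
  have h : HasDerivAt (fun z : ℂ => Complex.exp (Complex.I / 2 * z))
      (Complex.exp (Complex.I / 2 * (u:ℂ)) * (Complex.I / 2)) (u:ℂ) := by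
    simpa using ((hasDerivAt_id ((u:ℝ):ℂ)).const_mul (Complex.I / 2)).cexp
  exact h.comp_ofReal

lemma hsin (u : ℝ) : HasDerivAt (fun y : ℝ => ((Real.sin ((3/2)*y) :ℝ):ℂ))
    ((Real.cos ((3/2)*u) * (3/2) :ℝ):ℂ) u := by
  have h := (Real.hasDerivAt_sin ((3/2)*u)).comp u ((hasDerivAt_id u).const_mul (3/2))
  have h' : HasDerivAt (fun y : ℝ => Real.sin ((3/2)*y)) (Real.cos ((3/2)*u) * ((3/2)*(1:ℝ))) u := h
  have h'' : HasDerivAt (fun y : ℝ => Real.sin ((3/2)*y)) (Real.cos ((3/2)*u) * (3/2)) u := by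
    simpa using h'
  exact h''.ofReal_comp

lemma hcos (u : ℝ) : HasDerivAt (fun y : ℝ => ((Real.cos ((3/2)*y) :ℝ):ℂ))
    ((-Real.sin ((3/2)*u) * (3/2) :ℝ):ℂ) u := by
  have h := (Real.hasDerivAt_cos ((3/2)*u)).comp u ((hasDerivAt_id u).const_mul (3/2))
  have h' : HasDerivAt (fun y : ℝ => Real.cos ((3/2)*y)) (-Real.sin ((3/2)*u) * ((3/2)*(1:ℝ))) u := h
  have h'' : HasDerivAt (fun y : ℝ => Real.cos ((3/2)*y)) (-Real.sin ((3/2)*u) * (3/2)) u := by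
    simpa using h'
  exact h''.ofReal_comp

lemma gg_deriv (c : ℂ) (u : ℝ) (hs : Real.sin ((3/2)*u) ≠ 0) :
    HasDerivAt (gg c) (gg1 c u) u := by
  have hs' : ((Real.sin ((3/2)*u) :ℝ):ℂ) ≠ 0 := by exact_mod_cast hs
  have hnum : HasDerivAt (fun y : ℝ => c * Complex.exp (Complex.I / 2 * (y:ℂ)))
      (c * (Complex.exp (Complex.I / 2 * (u:ℂ)) * (Complex.I / 2))) u := (hexp u).const_mul c
  have h := hnum.div (hsin u) hs'
  refine h.congr_deriv ?_
  symm
  unfold gg1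
  rw [div_eq_div_iff (by simpa using pow_ne_zero 2 hs') (by simpa using pow_ne_zero 2 hs')]
  push_cast
  ring

lemma gg1_deriv (c : ℂ) (u : ℝ) (hs : Real.sin ((3/2)*u) ≠ 0) :
    HasDerivAt (gg1 c) (gg2 c u) u := by
  have hs' : ((Real.sin ((3/2)*u) :ℝ):ℂ) ≠ 0 := by exact_mod_cast hs
  have hnum : HasDerivAt
      (fun y : ℝ => c * Complex.exp (Complex.I / 2 * (y:ℂ)) *
        (Complex.I * ((Real.sin ((3/2)*y) :ℝ):ℂ) - 3 * ((Real.cos ((3/2)*y) :ℝ):ℂ)))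
      (c * (Complex.exp (Complex.I / 2 * (u:ℂ)) * (Complex.I / 2)) *
        (Complex.I * ((Real.sin ((3/2)*u) :ℝ):ℂ) - 3 * ((Real.cos ((3/2)*u) :ℝ):ℂ))
        + c * Complex.exp (Complex.I / 2 * (u:ℂ)) *
          (Complex.I * ((Real.cos ((3/2)*u) * (3/2) :ℝ):ℂ) - 3 * ((-Real.sin ((3/2)*u) * (3/2) :ℝ):ℂ))) u :=
    ((hexp u).const_mul c).mul (((hsin u).const_mul Complex.I).sub ((hcos u).const_mul 3))
  have hden : HasDerivAt (fun y : ℝ => 2 * ((Real.sin ((3/2)*y) :ℝ):ℂ)^2)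
      (2 * (((Real.cos ((3/2)*u) * (3/2) :ℝ):ℂ) * ((Real.sin ((3/2)*u) :ℝ):ℂ)
        + ((Real.sin ((3/2)*u) :ℝ):ℂ) * ((Real.cos ((3/2)*u) * (3/2) :ℝ):ℂ))) u := by
    have h2 := ((hsin u).mul (hsin u)).const_mul (2:ℂ)
    simpa [← pow_two] using h2
  have hden' : (2 * ((Real.sin ((3/2)*u) :ℝ):ℂ)^2) ≠ 0 := by
    simpa using pow_ne_zero 2 hs'
  have h := hnum.div hden hden'
  refine h.congr_deriv ?_
  symm
  unfold gg2
  have hI := Complex.I_sq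
  rw [div_eq_div_iff (by simpa using pow_ne_zero 3 hs') (pow_ne_zero 2 hden')]
  push_cast
  linear_combination (-2*c*Complex.exp (Complex.I/2*(u:ℂ)) * (Complex.sin ((3/2:ℂ)*(u:ℂ)))^6) * hI

lemma key (t k c cb E Eb s co : ℂ) (ht0 : t ≠ 0) (ht : t^2 = 3)
    (hs : s ≠ 0)
    (hE : E * Eb = 1) (hE3 : E^3 = co + Complex.I*s) (hsc : s^2+co^2 = 1)
    (hc : t*k*c = -2*cb^2) :
    Complex.I * (-(t*k^2) * (c*E*(Complex.I*s - 3*co)/(2*s^2)))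
      - (1/t) * ((t*k)^2 * (c*E*(4*s^2 - 3*Complex.I*co*s + 9*co^2)/(2*s^3)))
      + 2*t*(cb*Eb/s)*(t*k*(cb*Eb*(-(Complex.I*s) - 3*co)/(2*s^2))) = 0 := by
  have hI := Complex.I_sq
  have hsi : s * s⁻¹ = 1 := mul_inv_cancel₀ hs
  have hti : t * t⁻¹ = 1 := mul_inv_cancel₀ ht0
  linear_combination
    (-(1/2)*t*k^2*c*E*s*s⁻¹^2 + 3*t*k^2*c*Eb^2*co*s^2*s⁻¹^3) * hI
    + ((3/2)*t*k^2*c*E*(s^2-2*Complex.I*co*s+3*co^2)*(E*Eb+1)*s⁻¹^3) * hE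
    + (-(3/2)*t*k^2*c*Eb^2*(s^2-2*Complex.I*co*s+3*co^2)*s⁻¹^3) * hE3
    + (-(3/2)*t*k^2*c*Eb^2*(3*co+Complex.I*s)*s⁻¹^3) * hsc
    + ((3/2)*k*Eb^2*(-(Complex.I*s)-3*co)*s⁻¹^3) * hc
    + (k*cb^2*Eb^2*(-(Complex.I*s)-3*co)*s⁻¹^3) * ht
    + (-(1/2)*k^2*c*E*(4*s^2-3*Complex.I*co*s+9*co^2)*s⁻¹^3*t) * hti
    + (-(1/2)*t*k^2*c*E*(s+3*Complex.I*co)*s⁻¹^2) * hsi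
/-- The (singular) one-soliton
`q(x,t) = -(1/2) √3 k₀ ω² e^{(i/2)(√3 k₀(x-k₀t)+φ+π/6)} / sin((3/2)(√3 k₀(x-k₀t)+φ+π/6))`
is smooth and solves `i q_t - (1/√3) q_xx + 2√3 q̄ q̄_x = 0` away from the lines
where `(3/2)(√3 k₀(x-k₀t)+φ+π/6) ∈ πℤ`. -/
theorem one_soliton (k₀ : ℝ) (hk₀ : k₀ ≠ 0) (φ : ℝ)
    (θ : ℝ × ℝ → ℝ)
    (hθ : θ = fun p => Real.sqrt 3 * k₀ * (p.1 - k₀ * p.2) + φ + Real.pi / 6)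
    (q : ℝ × ℝ → ℂ)
    (hq : q = fun p =>
      -(1 / 2) * ((Real.sqrt 3 * k₀ : ℝ) : ℂ) * ω ^ 2
          * Complex.exp ((Complex.I / 2) * ((θ p : ℝ) : ℂ))
        / ((Real.sin ((3 / 2) * θ p) : ℝ) : ℂ))
    (S : Set (ℝ × ℝ))
    (hS : S = {p : ℝ × ℝ | ¬∃ n : ℤ, (3 / 2) * θ p = n * Real.pi}) :
    ContDiffOn ℝ (⊤ : ℕ∞) q S ∧
    ∀ p ∈ S,
      Complex.I * pdt q p - (1 / (Real.sqrt 3 : ℂ)) * pdx (pdx q) p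
        + 2 * (Real.sqrt 3 : ℂ) * (starRingEnd ℂ) (q p) * (starRingEnd ℂ) (pdx q p) = 0 := by
  have hqg : q = fun p => gg (cc k₀) (θ p) := by rw [hq]; rfl
  -- membership criterion
  have hsθ : ∀ p ∈ S, Real.sin ((3/2) * θ p) ≠ 0 := by
    intro p hp h0
    rw [hS] at hp
    rcases Real.sin_eq_zero_iff.1 h0 with ⟨n, hn⟩
    exact hp ⟨n, hn.symm⟩
  -- θ is smooth
  have hθc : ContDiff ℝ (⊤ : ℕ∞) θ := by
    rw [hθ]
    exact (((contDiff_const.mul (contDiff_fst.sub (contDiff_const.mul contDiff_snd)))).add contDiff_const).add contDiff_const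
  -- smoothness of q on S
  have hsmooth : ContDiffOn ℝ (⊤ : ℕ∞) q S := by
    rw [hqg]
    have hocast : ContDiff ℝ (⊤ : ℕ∞) (fun p : ℝ × ℝ => ((θ p : ℝ) : ℂ)) :=
      Complex.ofRealCLM.contDiff.comp hθc
    have hnum : ContDiff ℝ (⊤ : ℕ∞) (fun p : ℝ × ℝ =>
        cc k₀ * Complex.exp (Complex.I / 2 * ((θ p : ℝ) : ℂ))) :=
      contDiff_const.mul ((Complex.contDiff_exp (𝕜 := ℝ)).comp
        (contDiff_const.mul hocast))
    have hden : ContDiff ℝ (⊤ : ℕ∞) (fun p : ℝ × ℝ => ((Real.sin ((3/2) * θ p) : ℝ) : ℂ)) :=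
      Complex.ofRealCLM.contDiff.comp (Real.contDiff_sin.comp (contDiff_const.mul hθc))
    have h0 : ∀ p ∈ S, ((Real.sin ((3/2) * θ p) : ℝ) : ℂ) ≠ 0 :=
      fun p hp => by simpa using Complex.ofReal_ne_zero.mpr (hsθ p hp)
    simp only [gg, div_eq_mul_inv]
    exact hnum.contDiffOn.mul (hden.contDiffOn.inv h0)
  refine ⟨hsmooth, ?_⟩
  -- S is open
  have hset : S = {p : ℝ × ℝ | Real.sin ((3/2) * θ p) ≠ 0} := by
    rw [hS]; ext p
    have hiff : (∃ n : ℤ, (3/2) * θ p = n * Real.pi) ↔ Real.sin ((3/2) * θ p) = 0 := by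
      rw [Real.sin_eq_zero_iff]
      exact exists_congr fun n => eq_comm
    simp only [Set.mem_setOf_eq, ne_eq]
    exact not_congr hiff
  have hSopen : IsOpen S := by
    have hcont : Continuous fun p => Real.sin ((3/2) * θ p) :=
      Real.continuous_sin.comp (continuous_const.mul hθc.continuous)
    rw [hset]
    exact isOpen_compl_singleton.preimage hcont
  -- the PDE
  intro p hp
  have hsp := hsθ p hp
  set L : (ℝ × ℝ) →L[ℝ] ℝ :=
    (Real.sqrt 3 * k₀) • ((ContinuousLinearMap.fst ℝ ℝ ℝ) - k₀ • (ContinuousLinearMap.snd ℝ ℝ ℝ)) with hL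
  have hθd : ∀ p' : ℝ × ℝ, HasFDerivAt θ L p' := by
    intro p'
    rw [hθ]
    exact (((hasFDerivAt_fst.sub (hasFDerivAt_snd.const_mul k₀)).const_mul
      (Real.sqrt 3 * k₀)).add_const φ).add_const (Real.pi / 6)
  have hqd : ∀ p' ∈ S, HasFDerivAt q
      ((ContinuousLinearMap.smulRight (1 : ℝ →L[ℝ] ℝ) (gg1 (cc k₀) (θ p'))).comp L) p' := by
    intro p' hp'
    rw [hqg]
    exact ((gg_deriv (cc k₀) (θ p') (hsθ p' hp')).hasFDerivAt).comp p' (hθd p')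
  have hpdx : ∀ p' ∈ S, pdx q p' =
      ((Real.sqrt 3 : ℝ) : ℂ) * ((k₀ : ℝ) : ℂ) * gg1 (cc k₀) (θ p') := by
    intro p' hp'
    have h := (hqd p' hp').fderiv
    simp only [pdx, h]
    simp only [ContinuousLinearMap.coe_comp', Function.comp_apply,
      ContinuousLinearMap.smulRight_apply, ContinuousLinearMap.one_apply, hL,
      ContinuousLinearMap.smul_apply, ContinuousLinearMap.coe_sub',
      ContinuousLinearMap.coe_fst', ContinuousLinearMap.coe_snd', Pi.sub_apply,
      smul_eq_mul, Complex.real_smul]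
    push_cast
    ring
  have hpdt : pdt q p = -(((Real.sqrt 3 : ℝ) : ℂ) * ((k₀ : ℝ) : ℂ)^2) * gg1 (cc k₀) (θ p) := by
    have h := (hqd p hp).fderiv
    simp only [pdt, h]
    simp only [ContinuousLinearMap.coe_comp', Function.comp_apply,
      ContinuousLinearMap.smulRight_apply, ContinuousLinearMap.one_apply, hL,
      ContinuousLinearMap.smul_apply, ContinuousLinearMap.coe_sub',
      ContinuousLinearMap.coe_fst', ContinuousLinearMap.coe_snd', Pi.sub_apply,
      smul_eq_mul, Complex.real_smul]
    push_cast
    ring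
  have hpdxx : pdx (pdx q) p =
      ((Real.sqrt 3 : ℝ) : ℂ)^2 * ((k₀ : ℝ) : ℂ)^2 * gg2 (cc k₀) (θ p) := by
    have hev : pdx q =ᶠ[nhds p]
        (fun p' => ((Real.sqrt 3 : ℝ) : ℂ) * ((k₀ : ℝ) : ℂ) * gg1 (cc k₀) (θ p')) :=
      Filter.eventuallyEq_of_mem (hSopen.mem_nhds hp) (fun p' hp' => hpdx p' hp')
    have hQd : HasFDerivAt
        (fun p' => ((Real.sqrt 3 : ℝ) : ℂ) * ((k₀ : ℝ) : ℂ) * gg1 (cc k₀) (θ p'))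
        ((((Real.sqrt 3 : ℝ) : ℂ) * ((k₀ : ℝ) : ℂ)) •
          ((ContinuousLinearMap.smulRight (1 : ℝ →L[ℝ] ℝ) (gg2 (cc k₀) (θ p))).comp L)) p :=
      (((gg1_deriv (cc k₀) (θ p) hsp).hasFDerivAt).comp p (hθd p)).const_mul _
    rw [show pdx (pdx q) p = fderiv ℝ (pdx q) p (1, 0) from rfl, hev.fderiv_eq, hQd.fderiv]
    simp only [ContinuousLinearMap.smul_apply, ContinuousLinearMap.coe_comp',
      Function.comp_apply, ContinuousLinearMap.smulRight_apply,
      ContinuousLinearMap.one_apply, hL, ContinuousLinearMap.coe_sub',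
      ContinuousLinearMap.coe_fst', ContinuousLinearMap.coe_snd', Pi.sub_apply,
      smul_eq_mul, Complex.real_smul]
    push_cast
    ring
  rw [hpdt, hpdxx, hpdx p hp]
  simp only [hqg]
  simp only [gg, gg1, gg2, map_div₀, map_mul, map_sub, map_add, map_neg, map_pow,
    map_ofNat, Complex.conj_ofReal, ← Complex.exp_conj, Complex.conj_I]
  have ht0 : ((Real.sqrt 3 : ℝ):ℂ) ≠ 0 :=
    Complex.ofReal_ne_zero.mpr (ne_of_gt (Real.sqrt_pos.mpr (by norm_num)))
  have ht : ((Real.sqrt 3 : ℝ):ℂ)^2 = 3 := by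
    rw [← Complex.ofReal_pow, Real.sq_sqrt (by norm_num : (0:ℝ) ≤ 3)]
    norm_num
  have hs : ((Real.sin ((3/2) * θ p) : ℝ):ℂ) ≠ 0 := Complex.ofReal_ne_zero.mpr hsp
  have hE : Complex.exp (Complex.I/2 * ((θ p : ℝ):ℂ)) * Complex.exp (-Complex.I/2 * ((θ p : ℝ):ℂ)) = 1 := by
    rw [← Complex.exp_add,
      show Complex.I/2 * ((θ p : ℝ):ℂ) + -Complex.I/2 * ((θ p : ℝ):ℂ) = 0 from by ring,
      Complex.exp_zero]
  have hE3 : Complex.exp (Complex.I/2 * ((θ p : ℝ):ℂ))^3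
      = ((Real.cos ((3/2) * θ p) : ℝ):ℂ) + Complex.I * ((Real.sin ((3/2) * θ p) : ℝ):ℂ) := by
    rw [← Complex.exp_nat_mul,
      show ((3:ℕ):ℂ) * (Complex.I/2 * ((θ p : ℝ):ℂ)) = (((3/2) * θ p : ℝ):ℂ) * Complex.I from by
        push_cast; ring,
      Complex.exp_mul_I, ← Complex.ofReal_cos, ← Complex.ofReal_sin]
    ring
  have hsc : ((Real.sin ((3/2) * θ p) : ℝ):ℂ)^2 + ((Real.cos ((3/2) * θ p) : ℝ):ℂ)^2 = 1 := by
    exact_mod_cast Real.sin_sq_add_cos_sq ((3/2) * θ p)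
  have hcω := omega_conj_mul
  have hω3 := omega_cube
  have hc : ((Real.sqrt 3:ℝ):ℂ) * ((k₀:ℝ):ℂ) * cc k₀ = -2 * ((starRingEnd ℂ) (cc k₀))^2 := by
    simp only [cc, map_mul, map_neg, map_div₀, map_one, map_ofNat, map_pow, Complex.conj_ofReal]
    push_cast
    linear_combination ((1/2)*((Real.sqrt 3:ℝ):ℂ)^2*((k₀:ℝ):ℂ)^2) *
      ( (-(((starRingEnd ℂ) ω)^4)*(ω^3+1)) * hω3
        + (ω^2*(((starRingEnd ℂ) ω*ω)^3+((starRingEnd ℂ) ω*ω)^2+(starRingEnd ℂ) ω*ω+1)) * hcω )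
  linear_combination key ((Real.sqrt 3:ℝ):ℂ) ((k₀:ℝ):ℂ) (cc k₀) ((starRingEnd ℂ) (cc k₀))
    (Complex.exp (Complex.I/2 * ((θ p : ℝ):ℂ))) (Complex.exp (-Complex.I/2 * ((θ p : ℝ):ℂ)))
    ((Real.sin ((3/2) * θ p) : ℝ):ℂ) ((Real.cos ((3/2) * θ p) : ℝ):ℂ)
    ht0 ht hs hE hE3 hsc hc
end

section
/- Let c₁ ∈ ℝ with c₁ ≠ 0 and define u : ℝ² → ℝ by u(x,t) = (1/2)·( 1 − 3c₁² / sin²( (1/2) c₁ (x − c₁ t) ) ). Then u is smooth and satisfies the "good" Boussinesq equation u_tt − u_xx + (u²)_xx + u_xxxx = 0 on the open set of all (x,t) ∈ ℝ² for which (1/2) c₁ (x − c₁ t) is not an integer multiple of π. -/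
namespace OneSolitonAux

/-- The traveling-wave phase as a function of `(x,t)`. -/
noncomputable def L (c₁ : ℝ) : ℝ × ℝ → ℝ := fun p => (1 / 2) * c₁ * (p.1 - c₁ * p.2)

/-- The phase as a continuous linear map. -/
noncomputable def ell (c₁ : ℝ) : ℝ × ℝ →L[ℝ] ℝ :=
  ((1 / 2) * c₁) • (ContinuousLinearMap.fst ℝ ℝ ℝ)
    - ((1 / 2) * c₁ * c₁) • (ContinuousLinearMap.snd ℝ ℝ ℝ)

lemma L_eq (c₁ : ℝ) : L c₁ = ⇑(ell c₁) := by
  funext p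
  simp only [L, ell, ContinuousLinearMap.coe_sub', Pi.sub_apply,
    ContinuousLinearMap.coe_smul', Pi.smul_apply, ContinuousLinearMap.coe_fst',
    ContinuousLinearMap.coe_snd', smul_eq_mul]
  ring

lemma hasFDerivAt_L (c₁ : ℝ) (p : ℝ × ℝ) : HasFDerivAt (L c₁) (ell c₁) p := by
  rw [L_eq]; exact (ell c₁).hasFDerivAt

lemma ell_apply_x (c₁ : ℝ) : ell c₁ (1, 0) = (1 / 2) * c₁ := by
  simp [ell]

lemma ell_apply_t (c₁ : ℝ) : ell c₁ (0, 1) = -((1 / 2) * c₁ * c₁) := by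
  simp [ell]

/-- The open set where the solution is defined. -/
def Sset (c₁ : ℝ) : Set (ℝ × ℝ) := {p | Real.sin (L c₁ p) ≠ 0}

lemma isOpen_Sset (c₁ : ℝ) : IsOpen (Sset c₁) := by
  have hcont : Continuous fun p : ℝ × ℝ => Real.sin (L c₁ p) := by
    apply Real.continuous_sin.comp
    unfold L; fun_prop
  exact isOpen_compl_singleton.preimage hcont

/-- `V s = 1 / sin² s`. -/
noncomputable def V (s : ℝ) : ℝ := (Real.sin s ^ 2)⁻¹

/-- `C s = cos s / sin³ s`. -/
noncomputable def C (s : ℝ) : ℝ := Real.cos s * (Real.sin s ^ 3)⁻¹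

lemma hasDerivAt_V {s : ℝ} (hs : Real.sin s ≠ 0) :
    HasDerivAt V (-2 * C s) s := by
  have h : HasDerivAt (fun s => Real.sin s ^ 2)
      (2 * Real.sin s ^ 1 * Real.cos s) s := (Real.hasDerivAt_sin s).pow 2
  have h2 := h.inv (pow_ne_zero 2 hs)
  refine h2.congr_deriv ?_
  symm
  unfold C
  field_simp

lemma hasDerivAt_C {s : ℝ} (hs : Real.sin s ≠ 0) :
    HasDerivAt C (-3 * V s ^ 2 + 2 * V s) s := by
  have h3 : HasDerivAt (fun s => Real.sin s ^ 3)
      (3 * Real.sin s ^ 2 * Real.cos s) s := (Real.hasDerivAt_sin s).pow 3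
  have h := (Real.hasDerivAt_cos s).mul (h3.inv (pow_ne_zero 3 hs))
  refine h.congr_deriv ?_
  symm
  unfold V
  have hpy := Real.sin_sq_add_cos_sq s
  simp only [Pi.inv_apply]
  field_simp
  linear_combination 3 * hpy

lemma C_sq {s : ℝ} (hs : Real.sin s ≠ 0) : C s ^ 2 = V s ^ 3 - V s ^ 2 := by
  unfold C V
  have hpy := Real.sin_sq_add_cos_sq s
  field_simp
  linear_combination hpy

/-- `f0 = u` as a function of the phase. -/
noncomputable def f0 (c₁ : ℝ) (s : ℝ) : ℝ := (1 / 2) * (1 - 3 * c₁ ^ 2 / Real.sin s ^ 2)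

noncomputable def f1 (c₁ : ℝ) (s : ℝ) : ℝ := 3 * c₁ ^ 2 * C s

noncomputable def f2 (c₁ : ℝ) (s : ℝ) : ℝ := -(3 * c₁ ^ 2 / 2) * (6 * V s ^ 2 - 4 * V s)

noncomputable def f3 (c₁ : ℝ) (s : ℝ) : ℝ :=
  -(3 * c₁ ^ 2 / 2) * (-24 * V s * C s + 8 * C s)

noncomputable def f4 (c₁ : ℝ) (s : ℝ) : ℝ :=
  -(3 * c₁ ^ 2 / 2) * (120 * V s ^ 3 - 120 * V s ^ 2 + 16 * V s)

lemma f0_eq (c₁ s : ℝ) : f0 c₁ s = (1 / 2) * (1 - 3 * c₁ ^ 2 * V s) := by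
  unfold f0 V; ring

lemma hasDerivAt_f0 (c₁ : ℝ) {s : ℝ} (hs : Real.sin s ≠ 0) :
    HasDerivAt (f0 c₁) (f1 c₁ s) s := by
  have : HasDerivAt (fun s => (1 / 2 : ℝ) * (1 - 3 * c₁ ^ 2 * V s))
      ((1 / 2) * (-(3 * c₁ ^ 2 * (-2 * C s)))) s :=
    (((hasDerivAt_V hs).const_mul (3 * c₁ ^ 2)).const_sub 1).const_mul (1 / 2)
  have heq : f0 c₁ = fun s => (1 / 2 : ℝ) * (1 - 3 * c₁ ^ 2 * V s) := by
    funext t; exact f0_eq c₁ t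
  rw [heq]
  convert this using 1
  unfold f1; ring

lemma hasDerivAt_f1 (c₁ : ℝ) {s : ℝ} (hs : Real.sin s ≠ 0) :
    HasDerivAt (f1 c₁) (f2 c₁ s) s := by
  have := (hasDerivAt_C hs).const_mul (3 * c₁ ^ 2)
  refine this.congr_deriv ?_
  symm
  unfold f2; ring

lemma hasDerivAt_f2 (c₁ : ℝ) {s : ℝ} (hs : Real.sin s ≠ 0) :
    HasDerivAt (f2 c₁) (f3 c₁ s) s := by
  have hV := hasDerivAt_V hs
  have : HasDerivAt (fun s => -(3 * c₁ ^ 2 / 2) * (6 * V s ^ 2 - 4 * V s))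
      (-(3 * c₁ ^ 2 / 2) * (6 * (2 * V s ^ 1 * (-2 * C s)) - 4 * (-2 * C s))) s :=
    (((hV.pow 2).const_mul 6).sub (hV.const_mul 4)).const_mul _
  refine this.congr_deriv ?_
  symm
  unfold f3; ring

lemma hasDerivAt_f3 (c₁ : ℝ) {s : ℝ} (hs : Real.sin s ≠ 0) :
    HasDerivAt (f3 c₁) (f4 c₁ s) s := by
  have hV := hasDerivAt_V hs
  have hC := hasDerivAt_C hs
  have : HasDerivAt (fun s => -(3 * c₁ ^ 2 / 2) * (-24 * V s * C s + 8 * C s))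
      (-(3 * c₁ ^ 2 / 2) *
        ((-24 * (-2 * C s)) * C s + (-24 * V s) * (-3 * V s ^ 2 + 2 * V s)
          + 8 * (-3 * V s ^ 2 + 2 * V s))) s :=
    ((((hV.const_mul (-24)).mul hC)).add (hC.const_mul 8)).const_mul _
  refine this.congr_deriv ?_
  symm
  unfold f4
  linear_combination ((72 : ℝ) * c₁ ^ 2) * C_sq hs

/-- square of the solution and its derivatives -/
noncomputable def g0 (c₁ : ℝ) (s : ℝ) : ℝ := f0 c₁ s ^ 2

noncomputable def g1 (c₁ : ℝ) (s : ℝ) : ℝ := 2 * f0 c₁ s * f1 c₁ s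

noncomputable def g2 (c₁ : ℝ) (s : ℝ) : ℝ := 2 * f1 c₁ s ^ 2 + 2 * f0 c₁ s * f2 c₁ s

lemma hasDerivAt_g0 (c₁ : ℝ) {s : ℝ} (hs : Real.sin s ≠ 0) :
    HasDerivAt (g0 c₁) (g1 c₁ s) s := by
  have := (hasDerivAt_f0 c₁ hs).pow 2
  refine this.congr_deriv ?_
  symm
  unfold g1; ring

lemma hasDerivAt_g1 (c₁ : ℝ) {s : ℝ} (hs : Real.sin s ≠ 0) :
    HasDerivAt (g1 c₁) (g2 c₁ s) s := by
  have := (((hasDerivAt_f0 c₁ hs).const_mul 2).mul (hasDerivAt_f1 c₁ hs))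
  refine this.congr_deriv ?_
  symm
  unfold g2; ring

/-- Key computation lemma: the `x`-partial of a composition with the phase. -/
lemma pdx_eq (c₁ : ℝ) {g : ℝ × ℝ → ℝ} {f f' : ℝ → ℝ}
    (hf : ∀ s, Real.sin s ≠ 0 → HasDerivAt f (f' s) s)
    (hg : ∀ q ∈ Sset c₁, g q = f (L c₁ q)) :
    ∀ p ∈ Sset c₁, pdx g p = (1 / 2) * c₁ * f' (L c₁ p) := by
  intro p hp
  have hev : g =ᶠ[nhds p] (f ∘ L c₁) :=
    Filter.eventuallyEq_of_mem ((isOpen_Sset c₁).mem_nhds hp) hg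
  have hF : HasFDerivAt (f ∘ L c₁) ((f' (L c₁ p)) • ell c₁) p :=
    (hf _ hp).comp_hasFDerivAt p (hasFDerivAt_L c₁ p)
  have : pdx g p = fderiv ℝ (f ∘ L c₁) p (1, 0) := by
    unfold pdx; rw [hev.fderiv_eq]
  rw [this, hF.fderiv]
  simp [ell_apply_x, mul_comm]

/-- Key computation lemma: the `t`-partial of a composition with the phase. -/
lemma pdt_eq (c₁ : ℝ) {g : ℝ × ℝ → ℝ} {f f' : ℝ → ℝ}
    (hf : ∀ s, Real.sin s ≠ 0 → HasDerivAt f (f' s) s)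
    (hg : ∀ q ∈ Sset c₁, g q = f (L c₁ q)) :
    ∀ p ∈ Sset c₁, pdt g p = -((1 / 2) * c₁ * c₁) * f' (L c₁ p) := by
  intro p hp
  have hev : g =ᶠ[nhds p] (f ∘ L c₁) :=
    Filter.eventuallyEq_of_mem ((isOpen_Sset c₁).mem_nhds hp) hg
  have hF : HasFDerivAt (f ∘ L c₁) ((f' (L c₁ p)) • ell c₁) p :=
    (hf _ hp).comp_hasFDerivAt p (hasFDerivAt_L c₁ p)
  have : pdt g p = fderiv ℝ (f ∘ L c₁) p (0, 1) := by
    unfold pdt; rw [hev.fderiv_eq]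
  rw [this, hF.fderiv]
  simp [ell_apply_t]
  ring

end OneSolitonAux

open OneSolitonAux in
/-- The (singular) traveling wave `u(x,t) = (1/2)(1 - 3c₁²/sin²((1/2)c₁(x-c₁t)))`
is smooth and solves the "good" Boussinesq equation
`u_tt - u_xx + (u²)_xx + u_xxxx = 0` away from the lines
where `(1/2)c₁(x-c₁t) ∈ πℤ`. -/
theorem one_soliton_boussinesq (c₁ : ℝ) (hc₁ : c₁ ≠ 0)
    (u : ℝ × ℝ → ℝ)
    (hu : u = fun p =>
      (1 / 2) * (1 - 3 * c₁ ^ 2 / Real.sin ((1 / 2) * c₁ * (p.1 - c₁ * p.2)) ^ 2))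
    (S : Set (ℝ × ℝ))
    (hS : S = {p : ℝ × ℝ | ¬∃ n : ℤ, (1 / 2) * c₁ * (p.1 - c₁ * p.2) = n * Real.pi}) :
    ContDiffOn ℝ (⊤ : ℕ∞) u S ∧
    ∀ p ∈ S,
      pdt (pdt u) p - pdx (pdx u) p + pdx (pdx (fun p' => u p' ^ 2)) p
        + pdx (pdx (pdx (pdx u))) p = 0 := by
  have hSS : S = Sset c₁ := by
    rw [hS]
    ext p
    simp only [Set.mem_setOf_eq, Sset, L, ne_eq, Real.sin_eq_zero_iff, not_exists]
    constructor
    · intro h n hn; exact h n hn.symm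
    · intro h n hn; exact h n hn.symm
  have hmem : ∀ p ∈ S, Real.sin (L c₁ p) ≠ 0 := by
    intro p hp; rw [hSS] at hp; exact hp
  have hu0 : ∀ q ∈ Sset c₁, u q = f0 c₁ (L c₁ q) := by
    intro q _; rw [hu]; rfl
  constructor
  · -- smoothness
    have huc : u = (f0 c₁) ∘ (L c₁) := by
      funext q; rw [hu]; rfl
    rw [huc, hSS]
    apply ContDiffOn.comp (t := {s : ℝ | Real.sin s ≠ 0})
    · have hden : ContDiffOn ℝ (⊤ : ℕ∞) (fun s : ℝ => Real.sin s ^ 2) {s | Real.sin s ≠ 0} :=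
        (Real.contDiff_sin.pow 2).contDiffOn
      have hdiv : ContDiffOn ℝ (⊤ : ℕ∞) (fun s : ℝ => 3 * c₁ ^ 2 / Real.sin s ^ 2)
          {s | Real.sin s ≠ 0} := by
        have := ContDiffOn.div (f := fun _ : ℝ => 3 * c₁ ^ 2)
          (g := fun s : ℝ => Real.sin s ^ 2) contDiffOn_const hden
          (fun s hs => pow_ne_zero 2 hs)
        exact this
      have h0 : ContDiffOn ℝ (⊤ : ℕ∞) (fun s : ℝ => (1 / 2 : ℝ) * (1 - 3 * c₁ ^ 2 / Real.sin s ^ 2))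
          {s | Real.sin s ≠ 0} := contDiffOn_const.mul (contDiffOn_const.sub hdiv)
      exact h0.congr (fun s _ => rfl)
    · have : ContDiff ℝ (⊤ : ℕ∞) (L c₁) := by unfold L; fun_prop
      exact this.contDiffOn
    · intro q hq; exact hq
  · -- the PDE
    intro p hp
    rw [hSS] at hp
    -- x-derivatives of u
    have h1x := pdx_eq c₁ (fun s hs => hasDerivAt_f0 c₁ hs) hu0
    have h2x := pdx_eq c₁ (g := pdx u)
      (f := fun s => (1 / 2) * c₁ * f1 c₁ s)
      (f' := fun s => (1 / 2) * c₁ * f2 c₁ s)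
      (fun s hs => (hasDerivAt_f1 c₁ hs).const_mul _) h1x
    have h3x := pdx_eq c₁ (g := pdx (pdx u))
      (f := fun s => (1 / 2) * c₁ * ((1 / 2) * c₁ * f2 c₁ s))
      (f' := fun s => (1 / 2) * c₁ * ((1 / 2) * c₁ * f3 c₁ s))
      (fun s hs => ((hasDerivAt_f2 c₁ hs).const_mul _).const_mul _) h2x
    have h4x := pdx_eq c₁ (g := pdx (pdx (pdx u)))
      (f := fun s => (1 / 2) * c₁ * ((1 / 2) * c₁ * ((1 / 2) * c₁ * f3 c₁ s)))
      (f' := fun s => (1 / 2) * c₁ * ((1 / 2) * c₁ * ((1 / 2) * c₁ * f4 c₁ s)))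
      (fun s hs => (((hasDerivAt_f3 c₁ hs).const_mul _).const_mul _).const_mul _) h3x
    -- t-derivatives of u
    have h1t := pdt_eq c₁ (fun s hs => hasDerivAt_f0 c₁ hs) hu0
    have h2t := pdt_eq c₁ (g := pdt u)
      (f := fun s => -((1 / 2) * c₁ * c₁) * f1 c₁ s)
      (f' := fun s => -((1 / 2) * c₁ * c₁) * f2 c₁ s)
      (fun s hs => (hasDerivAt_f1 c₁ hs).const_mul _) h1t
    -- x-derivatives of u²
    have hq0 : ∀ q ∈ Sset c₁, (fun p' => u p' ^ 2) q = g0 c₁ (L c₁ q) := by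
      intro q hq; simp only [g0, hu0 q hq]
    have h1q := pdx_eq c₁ (fun s hs => hasDerivAt_g0 c₁ hs) hq0
    have h2q := pdx_eq c₁ (g := pdx (fun p' => u p' ^ 2))
      (f := fun s => (1 / 2) * c₁ * g1 c₁ s)
      (f' := fun s => (1 / 2) * c₁ * g2 c₁ s)
      (fun s hs => (hasDerivAt_g1 c₁ hs).const_mul _) h1q
    rw [h2t p hp, h2x p hp, h2q p hp, h4x p hp]
    set s := L c₁ p with hsdef
    have hs : Real.sin s ≠ 0 := hp
    have hC2 := C_sq hs
    simp only [f0_eq, f1, f2, f3, f4, g2]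
    linear_combination ((9 : ℝ) / 2 * c₁ ^ 6) * hC2
end
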